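/- arXiv:1312.7147 — 7 statements merged into one kernel-verified Lean document; each statement's English description precedes it below -/
import Mathlib

section
/- For coprime positive integers α₁, α₂, the number of non-negative integers t with E([α₁,α₂])(t) = 0 (the 'gaps') equals (α₁−1)(α₂−1)/2. -/
open Finset

private lemma aux_not_rep_N {a b : ℕ} (cop : Nat.Coprime a b) (ha : 2 ≤ a) (hb : 2 ≤ b) :
    ¬ ∃ x y : ℕ, a * x + b * y = a * b - a - b := by
  rintro ⟨x, y, h⟩
  have hmn : a + b ≤ a * b := Nat.add_le_mul ha hb
  apply cop.mul_add_mul_ne_mul (a := x + 1) (b := y + 1) (Nat.succ_ne_zero x) (Nat.succ_ne_zero y)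
  rw [mul_comm (x + 1) a, mul_comm (y + 1) b, Nat.mul_add, Nat.mul_add, Nat.mul_one,
    Nat.mul_one]
  omega

private lemma aux_rep_of_gt {a b : ℕ} (cop : Nat.Coprime a b) (ha : 2 ≤ a) (hb : 2 ≤ b)
    {k : ℕ} (hk : a * b - a - b < k) : ∃ x y : ℕ, a * x + b * y = k := by
  have h := (frobeniusNumber_pair cop ha hb).2
  by_contra hc
  have hmem : k ∈ {k | k ∉ AddSubmonoid.closure ({a, b} : Set ℕ)} := by
    simp only [Set.mem_setOf_eq]
    rw [AddSubmonoid.mem_closure_pair]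
    push_neg
    intro x y hxy
    exact hc ⟨x, y, by rw [← hxy]; simp only [smul_eq_mul]; ring⟩
  exact absurd (h hmem) (not_le.mpr hk)

private lemma aux_rep_of_not_rep {a b : ℕ} (cop : Nat.Coprime a b) (ha : 2 ≤ a) (hb : 2 ≤ b)
    {t : ℕ} (ht : t ≤ a * b - a - b) (h : ¬ ∃ x y : ℕ, a * x + b * y = t) :
    ∃ x y : ℕ, a * x + b * y = a * b - a - b - t := by
  have hmn : a + b ≤ a * b := Nat.add_le_mul ha hb
  set A : ℤ := (a : ℤ) with hA
  set B : ℤ := (b : ℤ) with hB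
  have hB0 : 0 < B := by simp [hB]; omega
  have hpq : A * Nat.gcdA a b + B * Nat.gcdB a b = 1 := by
    have := Nat.gcd_eq_gcd_ab a b
    rw [cop] at this
    exact_mod_cast this.symm
  set p : ℤ := Nat.gcdA a b
  set q : ℤ := Nat.gcdB a b
  set u : ℤ := (t * p) % B with hu
  have hu0 : 0 ≤ u := Int.emod_nonneg _ (by omega)
  have huB : u < B := Int.emod_lt_of_pos _ hB0
  set v : ℤ := t * q + A * ((t * p) / B) with hv
  have huv : A * u + B * v = t := by
    have hdiv : (t * p) % B + B * ((t * p) / B) = t * p := Int.emod_add_mul_ediv (t * p) B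
    calc A * u + B * v = A * ((t * p) % B + B * ((t * p) / B)) + B * (t * q) := by
          rw [hu, hv]; ring
      _ = A * (t * p) + B * (t * q) := by rw [hdiv]
      _ = (A * p + B * q) * t := by ring
      _ = t := by rw [hpq]; ring
  have hvneg : v < 0 := by
    by_contra hc
    push_neg at hc
    refine h ⟨u.toNat, v.toNat, ?_⟩
    have : ((a * u.toNat + b * v.toNat : ℕ) : ℤ) = (t : ℤ) := by
      push_cast [Int.toNat_of_nonneg hu0, Int.toNat_of_nonneg hc]
      exact huv
    exact_mod_cast this
  have hx : 0 ≤ B - 1 - u := by omega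
  have hy : 0 ≤ -1 - v := by omega
  refine ⟨(B - 1 - u).toNat, (-1 - v).toNat, ?_⟩
  have hcast : ((a * b - a - b - t : ℕ) : ℤ) = A * B - A - B - t := by
    rw [show a * b - a - b - t = a * b - (a + b + t) by omega,
      Nat.cast_sub (by omega)]
    push_cast
    ring
  have key : ((a * (B - 1 - u).toNat + b * (-1 - v).toNat : ℕ) : ℤ) =
      ((a * b - a - b - t : ℕ) : ℤ) := by
    rw [hcast]
    push_cast [Int.toNat_of_nonneg hx, Int.toNat_of_nonneg hy]
    linear_combination -huv
  exact_mod_cast key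

/-- Sylvester: for coprime positive `α₁, α₂`, the number of gaps
(non-negative integers `t` not representable as `α₁x₁ + α₂x₂`)
equals `(α₁-1)(α₂-1)/2`. -/
theorem stmt_2 (a b : ℕ) (ha : 0 < a) (hb : 0 < b) (hab : Nat.gcd a b = 1) :
    {t : ℕ | ¬ ∃ x y : ℕ, a * x + b * y = t}.ncard = (a - 1) * (b - 1) / 2 := by
  have cop : Nat.Coprime a b := hab
  classical
  by_cases hA1 : a = 1
  · have hempty : {t : ℕ | ¬ ∃ x y : ℕ, a * x + b * y = t} = ∅ := by
      ext t
      simp only [Set.mem_setOf_eq, Set.mem_empty_iff_false, iff_false, not_not]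
      exact ⟨t, 0, by subst hA1; ring⟩
    rw [hempty, Set.ncard_empty, hA1]
    simp
  by_cases hB1 : b = 1
  · have hempty : {t : ℕ | ¬ ∃ x y : ℕ, a * x + b * y = t} = ∅ := by
      ext t
      simp only [Set.mem_setOf_eq, Set.mem_empty_iff_false, iff_false, not_not]
      exact ⟨0, t, by subst hB1; ring⟩
    rw [hempty, Set.ncard_empty, hB1]
    simp
  have ha2 : 2 ≤ a := by omega
  have hb2 : 2 ≤ b := by omega
  have hmn : a + b ≤ a * b := Nat.add_le_mul ha2 hb2
  set N := a * b - a - b with hN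
  set S := (range (N + 1)).filter (fun t => ¬ ∃ x y : ℕ, a * x + b * y = t) with hSdef
  have hset : {t : ℕ | ¬ ∃ x y : ℕ, a * x + b * y = t} = ↑S := by
    ext t
    simp only [Set.mem_setOf_eq, hSdef, coe_filter, mem_range, Set.mem_setOf_eq]
    constructor
    · intro h
      refine ⟨?_, h⟩
      by_contra hc
      exact h (aux_rep_of_gt cop ha2 hb2 (by omega))
    · exact fun h => h.2
  rw [hset, Set.ncard_coe_finset]
  set T := (range (N + 1)).filter (fun t => ∃ x y : ℕ, a * x + b * y = t) with hTdef
  have hcard : S.card = T.card := by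
    apply Finset.card_bij (fun t _ => N - t)
    · intro t htS
      simp only [hSdef, mem_filter, mem_range] at htS
      simp only [hTdef, mem_filter, mem_range]
      exact ⟨by omega, aux_rep_of_not_rep cop ha2 hb2 (by omega) htS.2⟩
    · intro t1 h1 t2 h2 he
      simp only [hSdef, mem_filter, mem_range] at h1 h2
      omega
    · intro u hu
      simp only [hTdef, mem_filter, mem_range] at hu
      refine ⟨N - u, ?_, by omega⟩
      simp only [hSdef, mem_filter, mem_range]
      refine ⟨by omega, ?_⟩
      rintro ⟨x, y, hxy⟩
      obtain ⟨x', y', h'⟩ := hu.2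
      refine aux_not_rep_N cop ha2 hb2 ⟨x + x', y + y', ?_⟩
      have : a * (x + x') + b * (y + y') = (a * x + b * y) + (a * x' + b * y') := by ring
      rw [this, hxy, h']
      omega
  have hsum : S.card + T.card = N + 1 := by
    rw [hSdef, hTdef]
    rw [add_comm]
    rw [Finset.card_filter_add_card_filter_not]
    exact card_range _
  have hNab : N + 1 = (a - 1) * (b - 1) := by
    have hba : b ≤ a * b - a := by omega
    have haa : a ≤ a * b := by omega
    zify [ha, hb, hba, haa, hN]
    ring
  omega
end

section
/- If the positive integers α₁,…,α_{N+1} have greatest common divisor 1, then E(α)(t) · N! · α₁⋯α_{N+1} / t^N tends to 1 as the integer t tends to infinity. -/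
open Filter Finset

namespace SchurAux

noncomputable def EE (n : ℕ) (a : Fin n → ℕ) (t : ℕ) : ℕ :=
  Nat.card {x : Fin n → ℕ // ∑ i, a i * x i = t}

noncomputable def FF (n : ℕ) (a : Fin n → ℕ) (t : ℕ) : ℕ :=
  Nat.card {x : Fin n → ℕ // ∑ i, a i * x i ≤ t}

theorem bound_of_sum_le {n : ℕ} {a : Fin n → ℕ} (ha : ∀ i, 0 < a i) {x : Fin n → ℕ} {t : ℕ}
    (h : ∑ i, a i * x i ≤ t) (i : Fin n) : x i ≤ t := by
  calc x i ≤ a i * x i := Nat.le_mul_of_pos_left _ (ha i)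
    _ ≤ ∑ i, a i * x i := Finset.single_le_sum (f := fun j => a j * x j) (fun j _ => Nat.zero_le _) (mem_univ i)
    _ ≤ t := h

theorem finite_le {n : ℕ} {a : Fin n → ℕ} (ha : ∀ i, 0 < a i) (t : ℕ) :
    Finite {x : Fin n → ℕ // ∑ i, a i * x i ≤ t} := by
  apply Finite.of_injective (fun x => (fun i => (⟨x.1 i, Nat.lt_succ_of_le
    (bound_of_sum_le ha x.2 i)⟩ : Fin (t+1)) : Fin n → Fin (t+1)))
  intro x y h
  ext i
  exact congrArg Fin.val (congrFun h i)

theorem finite_eq {n : ℕ} {a : Fin n → ℕ} (ha : ∀ i, 0 < a i) (t : ℕ) :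
    Finite {x : Fin n → ℕ // ∑ i, a i * x i = t} := by
  haveI := finite_le ha t
  apply Finite.of_injective
    (fun x : {x : Fin n → ℕ // ∑ i, a i * x i = t} =>
      (⟨x.1, le_of_eq x.2⟩ : {x : Fin n → ℕ // ∑ i, a i * x i ≤ t}))
  intro x y h
  ext i
  exact congrFun (congrArg Subtype.val h) i

/-- `F(t) = ∑_{s ≤ t} E(s)`. -/
theorem FF_eq_sum_EE {n : ℕ} {a : Fin n → ℕ} (ha : ∀ i, 0 < a i) (t : ℕ) :
    FF n a t = ∑ s ∈ range (t+1), EE n a s := by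
  haveI := finite_le ha t
  haveI : ∀ s : Fin (t+1), Finite {x : Fin n → ℕ // ∑ i, a i * x i = s} :=
    fun s => finite_eq ha s
  have e : {x : Fin n → ℕ // ∑ i, a i * x i ≤ t} ≃
      Σ s : Fin (t+1), {x : Fin n → ℕ // ∑ i, a i * x i = (s : ℕ)} :=
    { toFun := fun x => ⟨⟨∑ i, a i * x.1 i, Nat.lt_succ_of_le x.2⟩, x.1, rfl⟩
      invFun := fun p => ⟨p.2.1, by rw [p.2.2]; exact Nat.lt_succ_iff.mp p.1.2⟩
      left_inv := fun x => rfl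
      right_inv := fun p => by
        obtain ⟨⟨s, hs⟩, x, hx⟩ := p
        simp only [] at hx
        subst hx
        rfl }
  rw [FF, Nat.card_congr e]
  haveI inst : ∀ s : ℕ, Fintype {x : Fin n → ℕ // ∑ i, a i * x i = s} :=
    fun s => @Fintype.ofFinite _ (finite_eq ha s)
  rw [Nat.card_eq_fintype_card, Fintype.card_sigma]
  rw [Fin.sum_univ_eq_sum_range (fun s => Fintype.card {x : Fin n → ℕ // ∑ i, a i * x i = s})]
  exact Finset.sum_congr rfl fun s _ => (Nat.card_eq_fintype_card).symm

/-- recursion on the first variable -/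
theorem FF_succ {n : ℕ} {a : Fin (n+1) → ℕ} (ha : ∀ i, 0 < a i) (t : ℕ) :
    FF (n+1) a t = ∑ j ∈ range (t / a 0 + 1), FF n (a ∘ Fin.succ) (t - a 0 * j) := by
  have ha0 : 0 < a 0 := ha 0
  have key : ∀ j : ℕ, j ≤ t / a 0 → a 0 * j ≤ t := fun j hj => by
    calc a 0 * j ≤ a 0 * (t / a 0) := Nat.mul_le_mul_left _ hj
      _ ≤ t := Nat.mul_div_le t (a 0)
  have e : {x : Fin (n+1) → ℕ // ∑ i, a i * x i ≤ t} ≃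
      Σ j : Fin (t / a 0 + 1),
        {y : Fin n → ℕ // ∑ i, (a ∘ Fin.succ) i * y i ≤ t - a 0 * (j : ℕ)} :=
    { toFun := fun x => by
        refine ⟨⟨x.1 0, ?_⟩, fun i => x.1 i.succ, ?_⟩
        · have hx := x.2
          rw [Fin.sum_univ_succ] at hx
          have h1 : a 0 * x.1 0 ≤ t := le_trans (Nat.le_add_right _ _) hx
          exact Nat.lt_succ_of_le (Nat.le_div_iff_mul_le ha0 |>.mpr
            (by rw [Nat.mul_comm]; exact h1))
        · have hx := x.2
          rw [Fin.sum_univ_succ] at hx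
          simp only [Function.comp_apply, Fin.val_mk]
          omega
      invFun := fun p => by
        refine ⟨Fin.cons (p.1 : ℕ) p.2.1, ?_⟩
        rw [Fin.sum_univ_succ]
        simp only [Fin.cons_zero, Fin.cons_succ]
        have h1 : a 0 * (p.1 : ℕ) ≤ t := key _ (Nat.lt_succ_iff.mp p.1.2)
        have h2 := p.2.2
        simp only [Function.comp] at h2 ⊢
        omega
      left_inv := fun x => by
        ext i
        exact congrFun (Fin.cons_self_tail x.1) i
      right_inv := fun p => by
        obtain ⟨⟨j, hj⟩, y, hy⟩ := p
        refine Sigma.ext (Fin.ext ?_) (Subtype.heq_iff_coe_eq ?_ |>.mpr ?_) <;>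
          simp [Fin.cons_zero, Fin.cons_succ] }
  haveI := finite_le ha t
  haveI : ∀ s, Fintype {y : Fin n → ℕ // ∑ i, (a ∘ Fin.succ) i * y i ≤ s} :=
    fun s => @Fintype.ofFinite _ (finite_le (fun i => ha i.succ) s)
  rw [FF, Nat.card_congr e, Nat.card_eq_fintype_card, Fintype.card_sigma,
    Fin.sum_univ_eq_sum_range
      (fun j => Fintype.card {y : Fin n → ℕ // ∑ i, (a ∘ Fin.succ) i * y i ≤ t - a 0 * j})]
  exact Finset.sum_congr rfl fun s _ => (Nat.card_eq_fintype_card).symm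

/-- `x^(k+1) - y^(k+1) ≤ (k+1) x^k (x-y)` for `0 ≤ y ≤ x`. -/
theorem pow_sub_pow_le_upper {x y : ℝ} (hy : 0 ≤ y) (hxy : y ≤ x) (k : ℕ) :
    x ^ (k+1) - y ^ (k+1) ≤ (k+1) * x ^ k * (x - y) := by
  induction k with
  | zero => simp
  | succ k ih =>
    have hx : 0 ≤ x := le_trans hy hxy
    have h1 : x ^ (k+1+1) - y ^ (k+1+1) = x * (x ^ (k+1) - y ^ (k+1)) + y ^ (k+1) * (x - y) := by
      ring
    have h2 : x * (x ^ (k+1) - y ^ (k+1)) ≤ x * ((k+1) * x ^ k * (x - y)) :=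
      mul_le_mul_of_nonneg_left ih hx
    have h3 : y ^ (k+1) * (x - y) ≤ x ^ (k+1) * (x - y) :=
      mul_le_mul_of_nonneg_right (pow_le_pow_left₀ hy hxy _) (by linarith)
    have h4 : x * ((k+1) * x ^ k * (x - y)) ≤ (k+1) * x ^ (k+1) * (x - y) := le_of_eq (by ring)
    have h5 : ((k:ℝ)+1+1) * x ^ (k+1) * (x - y)
        = (k+1) * x ^ (k+1) * (x - y) + x ^ (k+1) * (x - y) := by ring
    push_cast
    linarith
/-- `(k+1) y^k (x-y) ≤ x^(k+1) - y^(k+1)` for `0 ≤ y ≤ x`. -/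
theorem pow_sub_pow_le_lower {x y : ℝ} (hy : 0 ≤ y) (hxy : y ≤ x) (k : ℕ) :
    (k+1) * y ^ k * (x - y) ≤ x ^ (k+1) - y ^ (k+1) := by
  induction k with
  | zero => simp
  | succ k ih =>
    have hx : 0 ≤ x := le_trans hy hxy
    have h1 : x ^ (k+1+1) - y ^ (k+1+1) = x * (x ^ (k+1) - y ^ (k+1)) + y ^ (k+1) * (x - y) := by
      ring
    have h2 : x * ((k+1) * y ^ k * (x - y)) ≤ x * (x ^ (k+1) - y ^ (k+1)) :=
      mul_le_mul_of_nonneg_left ih hx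
    have h5 : y * ((k+1) * y ^ k * (x - y)) ≤ x * ((k+1) * y ^ k * (x - y)) :=
      mul_le_mul_of_nonneg_right hxy
        (mul_nonneg (mul_nonneg (by positivity) (pow_nonneg hy k)) (by linarith))
    have h6 : y * ((k+1) * y ^ k * (x - y)) = (k+1) * y ^ (k+1) * (x - y) := by ring
    have h7 : ((k:ℝ)+1+1) * y ^ (k+1) * (x - y)
        = (k+1) * y ^ (k+1) * (x - y) + y ^ (k+1) * (x - y) := by ring
    push_cast
    linarith

/-- Lower Riemann-sum bound. -/
theorem sum_pow_lower (k : ℕ) {t α : ℝ} (hα : 0 < α) (m : ℕ)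
    (h1 : α * m ≤ t) (h2 : t < α * (m + 1)) :
    t ^ (k+1) ≤ (k+1) * α * ∑ j ∈ range (m+1), (t - α * j) ^ k := by
  have ht : 0 ≤ t := le_trans (by positivity) h1
  have hnn : ∀ j : ℕ, (j:ℝ) ≤ m → 0 ≤ t - α * j := by
    intro j hj
    nlinarith
  have step : ∀ j ∈ range m,
      (t - α * j) ^ (k+1) - (t - α * (j+1:ℕ)) ^ (k+1) ≤ (k+1) * α * (t - α * j) ^ k := by
    intro j hj
    have hjm : j < m := mem_range.mp hj
    have hj1 : ((j:ℝ)+1) ≤ m := by exact_mod_cast hjm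
    have h0 : 0 ≤ t - α * ((j:ℕ)+1:ℕ) := by
      apply hnn
      push_cast
      linarith
    have key := pow_sub_pow_le_upper (x := t - α * j) (y := t - α * ((j:ℕ)+1:ℕ)) h0
      (by push_cast; nlinarith) k
    have e1 : (t - α * (j:ℝ)) - (t - α * ((j+1:ℕ):ℝ)) = α := by push_cast; ring
    rw [e1] at key
    linarith [key]
  have tele : ∑ j ∈ range m,
      ((t - α * j) ^ (k+1) - (t - α * (j+1:ℕ)) ^ (k+1)) = t ^ (k+1) - (t - α * m) ^ (k+1) := by
    have h := Finset.sum_range_sub' (fun j : ℕ => (t - α * (j:ℝ)) ^ (k+1)) m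
    simpa using h
  have hlast : (t - α * m) ^ (k+1) ≤ (k+1) * α * (t - α * m) ^ k := by
    have h0 : 0 ≤ t - α * m := hnn m le_rfl
    have hlt : t - α * m ≤ α := by nlinarith
    have e : (t - α * m) ^ (k+1) = (t - α * m) ^ k * (t - α * m) := by ring
    rw [e]
    calc (t - α * m) ^ k * (t - α * m) ≤ (t - α * m) ^ k * ((k+1) * α) := by
          apply mul_le_mul_of_nonneg_left _ (pow_nonneg h0 k)
          nlinarith
      _ = (k+1) * α * (t - α * m) ^ k := by ring
  have hsum : ∑ j ∈ range m, ((t - α * j) ^ (k+1) - (t - α * (j+1:ℕ)) ^ (k+1))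
      ≤ ∑ j ∈ range m, ((k+1) * α * (t - α * j) ^ k) := Finset.sum_le_sum step
  rw [tele] at hsum
  have final : ∑ j ∈ range m, ((k+1) * α * (t - α * (j:ℝ)) ^ k) + (k+1) * α * (t - α * m) ^ k
      = (k+1) * α * ∑ j ∈ range (m+1), (t - α * j) ^ k := by
    rw [Finset.sum_range_succ, mul_add, Finset.mul_sum]
  linarith

/-- Upper Riemann-sum bound. -/
theorem sum_pow_upper (k : ℕ) {t α c : ℝ} (hα : 0 < α) (hc : 0 ≤ c) (m : ℕ)
    (h1 : α * m ≤ t) :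
    (k+1) * α * ∑ j ∈ range (m+1), (t + c - α * j) ^ k ≤ (t + c + α) ^ (k+1) := by
  have hnn : ∀ j : ℕ, (j:ℝ) ≤ m → 0 ≤ t + c - α * j := by
    intro j hj
    nlinarith
  have step : ∀ j ∈ range (m+1),
      (k+1) * α * (t + c - α * j) ^ k
        ≤ (t + c + α - α * j) ^ (k+1) - (t + c - α * j) ^ (k+1) := by
    intro j hj
    have hjm : (j:ℝ) ≤ m := by exact_mod_cast Nat.lt_succ_iff.mp (mem_range.mp hj)
    have h0 := hnn j hjm
    have key := pow_sub_pow_le_lower (x := t + c + α - α * j) (y := t + c - α * j) h0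
      (by linarith) k
    have e1 : (t + c + α - α * (j:ℝ)) - (t + c - α * j) = α := by ring
    rw [e1] at key
    linarith [key]
  have tele : ∑ j ∈ range (m+1),
      ((t + c + α - α * j) ^ (k+1) - (t + c + α - α * ((j+1:ℕ):ℝ)) ^ (k+1))
      = (t + c + α) ^ (k+1) - (t + c + α - α * ((m+1:ℕ):ℝ)) ^ (k+1) := by
    have h := Finset.sum_range_sub' (fun j : ℕ => (t + c + α - α * (j:ℝ)) ^ (k+1)) (m+1)
    simpa using h
  have shift : ∀ j : ℕ, (t + c - α * (j:ℝ)) ^ (k+1) = (t + c + α - α * ((j+1:ℕ):ℝ)) ^ (k+1) := by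
    intro j
    push_cast
    ring_nf
  have hsum : ∑ j ∈ range (m+1), ((k+1) * α * (t + c - α * (j:ℝ)) ^ k)
      ≤ ∑ j ∈ range (m+1),
          ((t + c + α - α * j) ^ (k+1) - (t + c + α - α * ((j+1:ℕ):ℝ)) ^ (k+1)) := by
    apply Finset.sum_le_sum
    intro j hj
    rw [← shift j]
    exact step j hj
  rw [tele] at hsum
  rw [← shift m] at hsum
  have h0m : 0 ≤ (t + c - α * (m:ℝ)) ^ (k+1) := by
    have := hnn m le_rfl
    positivity
  have : ∑ j ∈ range (m+1), ((k+1) * α * (t + c - α * (j:ℝ)) ^ k)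
      = (k+1) * α * ∑ j ∈ range (m+1), (t + c - α * j) ^ k := by rw [Finset.mul_sum]
  linarith

theorem FF_bounds {n : ℕ} (a : Fin n → ℕ) (ha : ∀ i, 0 < a i) (t : ℕ) :
    (t:ℝ)^n ≤ (FF n a t : ℝ) * n.factorial * ∏ i, (a i:ℝ) ∧
    (FF n a t : ℝ) * n.factorial * ∏ i, (a i:ℝ) ≤ ((t:ℝ) + ∑ i, (a i:ℝ))^n := by
  induction n generalizing t with
  | zero =>
    haveI : Unique {x : Fin 0 → ℕ // ∑ i, a i * x i ≤ t} :=
      ⟨⟨⟨finZeroElim, by simp⟩⟩, fun x => Subtype.ext (funext fun i => i.elim0)⟩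
    have h1 : FF 0 a t = 1 := Nat.card_unique
    rw [h1]
    simp
  | succ n ih =>
    set α := a 0 with hαdef
    have hα : 0 < α := ha 0
    have hαR : (0:ℝ) < α := by exact_mod_cast hα
    set a' : Fin n → ℕ := a ∘ Fin.succ with ha'def
    have ha' : ∀ i, 0 < a' i := fun i => ha i.succ
    set m := t / α with hmdef
    have hm1 : α * m ≤ t := Nat.mul_div_le t α
    have hm2 : t < α * (m + 1) := by
      rw [hmdef]
      have h1 := Nat.div_add_mod t α
      have h2 := Nat.mod_lt t hα
      have h3 : α * (t/α + 1) = α*(t/α) + α := by ring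
      omega
    have hm1R : (α:ℝ) * m ≤ t := by exact_mod_cast hm1
    have hm2R : (t:ℝ) < α * (m + 1) := by exact_mod_cast hm2
    have hrec : (FF (n+1) a t : ℝ) = ∑ j ∈ range (m+1), (FF n a' (t - α * j) : ℝ) := by
      rw [FF_succ ha t]
      push_cast
      rfl
    have hprod : ∏ i, (a i : ℝ) = α * ∏ i, (a' i : ℝ) := by
      rw [Fin.prod_univ_succ]
      rfl
    have hsumc : ∑ i, (a i : ℝ) = α + ∑ i, (a' i : ℝ) := by
      rw [Fin.sum_univ_succ]
      rfl
    have hfact : ((n+1).factorial : ℝ) = (n+1) * n.factorial := by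
      rw [Nat.factorial_succ]
      push_cast
      ring
    set P' : ℝ := ∏ i, (a' i : ℝ) with hP'
    set c' : ℝ := ∑ i, (a' i : ℝ) with hc'
    have hc'0 : 0 ≤ c' := Finset.sum_nonneg fun i _ => Nat.cast_nonneg _
    have hcast : ∀ j ∈ range (m+1), ((t - α * j : ℕ) : ℝ) = (t:ℝ) - α * j := by
      intro j hj
      have hjm : j ≤ m := Nat.lt_succ_iff.mp (mem_range.mp hj)
      have : α * j ≤ t := le_trans (Nat.mul_le_mul_left _ hjm) hm1
      push_cast [Nat.cast_sub this]
      ring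
    have key : (FF (n+1) a t : ℝ) * (n+1).factorial * ∏ i, (a i:ℝ)
        = (n+1) * α * ∑ j ∈ range (m+1), ((FF n a' (t - α * j) : ℝ) * n.factorial * P') := by
      rw [hrec, hprod, hfact, Finset.sum_mul, Finset.sum_mul, Finset.mul_sum]
      apply Finset.sum_congr rfl
      intro j _
      ring
    constructor
    · rw [key]
      have hlow : ∀ j ∈ range (m+1),
          ((t:ℝ) - α * j)^n ≤ (FF n a' (t - α * j) : ℝ) * n.factorial * P' := by
        intro j hj
        have := (ih a' ha' (t - α * j)).1
        rwa [hcast j hj] at this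
      calc ((t:ℝ))^(n+1) ≤ (n+1) * α * ∑ j ∈ range (m+1), ((t:ℝ) - α * j)^n :=
            sum_pow_lower n hαR m hm1R hm2R
        _ ≤ (n+1) * α * ∑ j ∈ range (m+1), ((FF n a' (t - α * j) : ℝ) * n.factorial * P') := by
            apply mul_le_mul_of_nonneg_left (Finset.sum_le_sum hlow)
            positivity
    · rw [key, hsumc]
      have hup : ∀ j ∈ range (m+1),
          (FF n a' (t - α * j) : ℝ) * n.factorial * P' ≤ ((t:ℝ) + c' - α * j)^n := by
        intro j hj
        have := (ih a' ha' (t - α * j)).2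
        rw [hcast j hj] at this
        calc (FF n a' (t - α * j) : ℝ) * n.factorial * P' ≤ ((t:ℝ) - α * j + c')^n := this
          _ = ((t:ℝ) + c' - α * j)^n := by ring_nf
      calc (n+1) * (α:ℝ) * ∑ j ∈ range (m+1), ((FF n a' (t - α * j) : ℝ) * n.factorial * P')
          ≤ (n+1) * α * ∑ j ∈ range (m+1), ((t:ℝ) + c' - α * j)^n := by
            apply mul_le_mul_of_nonneg_left (Finset.sum_le_sum hup)
            positivity
        _ ≤ ((t:ℝ) + c' + α)^(n+1) := sum_pow_upper n hαR hc'0 m hm1R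
        _ = ((t:ℝ) + (α + c'))^(n+1) := by ring_nf

def Rep (n : ℕ) (a : Fin n → ℕ) (s : ℕ) : Prop := ∃ x : Fin n → ℕ, ∑ i, a i * x i = s

theorem rep_add {n a} {s₁ s₂ : ℕ} (h₁ : Rep n a s₁) (h₂ : Rep n a s₂) : Rep n a (s₁ + s₂) := by
  obtain ⟨x, hx⟩ := h₁
  obtain ⟨y, hy⟩ := h₂
  exact ⟨x + y, by simp [Pi.add_apply, mul_add, Finset.sum_add_distrib, hx, hy]⟩

theorem rep_mul {n a} (k : ℕ) {s : ℕ} (h : Rep n a s) : Rep n a (k * s) := by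
  obtain ⟨x, hx⟩ := h
  refine ⟨fun i => k * x i, ?_⟩
  rw [← hx, Finset.mul_sum]
  apply Finset.sum_congr rfl
  intro i _
  ring

/-- Bezout for a Finset of naturals. -/
theorem bezout {ι : Type*} [DecidableEq ι] (a : ι → ℕ) (s : Finset ι) :
    ∃ c : ι → ℤ, ∑ i ∈ s, c i * (a i : ℤ) = ((s.gcd a : ℕ) : ℤ) := by
  induction s using Finset.induction with
  | empty => exact ⟨0, by simp⟩
  | insert j s' hi ih =>
    obtain ⟨c, hc⟩ := ih
    refine ⟨fun i => if i = j then Nat.gcdA (a j) (s'.gcd a)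
      else Nat.gcdB (a j) (s'.gcd a) * c i, ?_⟩
    rw [Finset.sum_insert hi, Finset.gcd_insert, gcd_eq_nat_gcd, Nat.gcd_eq_gcd_ab]
    have h1 : ∑ i ∈ s', (if i = j then Nat.gcdA (a j) (s'.gcd a)
        else Nat.gcdB (a j) (s'.gcd a) * c i) * (a i : ℤ)
        = Nat.gcdB (a j) (s'.gcd a) * ∑ i ∈ s', c i * a i := by
      rw [Finset.mul_sum]
      apply Finset.sum_congr rfl
      intro i hi'
      have : i ≠ j := fun h => hi (h ▸ hi')
      rw [if_neg this]
      ring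
    rw [h1, hc]
    simp only [if_pos rfl, if_true]
    ring

/-- All large naturals are representable. -/
theorem exists_rep_bound {n : ℕ} (a : Fin n → ℕ) (hgcd : Finset.univ.gcd a = 1) :
    ∃ C : ℕ, ∀ s : ℕ, C ≤ s → Rep n a s := by
  obtain ⟨c, hc⟩ := bezout a Finset.univ
  rw [hgcd] at hc
  have hc' : ∑ i, c i * (a i : ℤ) = 1 := by rw [hc]; norm_num
  -- u := ∑ (c i)⁺ a i, v := ∑ (c i)⁻ a i, u = v + 1
  set u : ℕ := ∑ i, (c i).toNat * a i with hu
  set v : ℕ := ∑ i, (-(c i)).toNat * a i with hv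
  have hrepu : Rep n a u := ⟨fun i => (c i).toNat, by
    rw [hu]; apply Finset.sum_congr rfl; intro i _; ring⟩
  have hrepv : Rep n a v := ⟨fun i => (-(c i)).toNat, by
    rw [hv]; apply Finset.sum_congr rfl; intro i _; ring⟩
  have huv : (u:ℤ) - v = 1 := by
    rw [hu, hv, ← hc']
    push_cast
    rw [← Finset.sum_sub_distrib]
    apply Finset.sum_congr rfl
    intro i _
    have : ((c i).toNat : ℤ) - ((-(c i)).toNat : ℤ) = c i := by omega
    nlinarith [this]
  have huv' : u = v + 1 := by omega
  refine ⟨v * v, ?_⟩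
  intro s hs
  rcases Nat.eq_zero_or_pos v with hv0 | hv0
  · -- v = 0, u = 1
    have : Rep n a (s * u) := rep_mul s hrepu
    rwa [huv', hv0, Nat.mul_one] at this
  · set k := s % v with hk
    set q := s / v with hq
    have hkv : k < v := Nat.mod_lt s hv0
    have hqk : k ≤ q := by
      have hqv : v ≤ q := by
        rw [hq]
        exact Nat.le_div_iff_mul_le hv0 |>.mpr (by nlinarith)
      omega
    have hrep : Rep n a ((q - k) * v + k * u) := rep_add (rep_mul _ hrepv) (rep_mul _ hrepu)
    have heq : (q - k) * v + k * u = s := by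
      have h1 : v * q + k = s := Nat.div_add_mod s v
      have h3 : q - k + k = q := Nat.sub_add_cancel hqk
      have h2 : (q - k) * v + k * (v+1) = q * v + k := by
        calc (q - k) * v + k * (v+1) = ((q-k)+k) * v + k := by ring
          _ = q * v + k := by rw [h3]
      rw [huv', h2, Nat.mul_comm q v]
      exact h1
    rwa [heq] at hrep

/-- monotonicity of E along representable shifts -/
theorem EE_mono {n : ℕ} {a : Fin n → ℕ} (ha : ∀ i, 0 < a i) {s : ℕ} (hs : Rep n a s) (t : ℕ) :
    EE n a t ≤ EE n a (t + s) := by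
  obtain ⟨y, hy⟩ := hs
  haveI := finite_eq ha (t + s)
  apply Nat.card_le_card_of_injective
    (fun x : {x : Fin n → ℕ // ∑ i, a i * x i = t} =>
      (⟨x.1 + y, by
        simp only [Pi.add_apply, mul_add, Finset.sum_add_distrib, x.2, hy]⟩ :
        {x : Fin n → ℕ // ∑ i, a i * x i = t + s}))
  intro x₁ x₂ h
  ext i
  have := congrFun (congrArg Subtype.val h) i
  simp only [Pi.add_apply] at this
  omega

theorem FF_split {n : ℕ} {a : Fin n → ℕ} (ha : ∀ i, 0 < a i) (u h : ℕ) :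
    FF n a (u + h) = FF n a u + ∑ s ∈ Ico (u+1) (u+h+1), EE n a s := by
  rw [FF_eq_sum_EE ha, FF_eq_sum_EE ha, Finset.range_eq_Ico,
    ← Finset.sum_Ico_consecutive (fun s => EE n a s) (Nat.zero_le (u+1)) (by omega),
    Finset.range_eq_Ico]

/-- Upper counting estimate. -/
theorem count_upper {n : ℕ} {a : Fin n → ℕ} (ha : ∀ i, 0 < a i) {C : ℕ}
    (hC : ∀ s : ℕ, C ≤ s → Rep n a s) (t h : ℕ) :
    EE n a t * h + FF n a (t + C) ≤ FF n a (t + C + h) := by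
  rw [FF_split ha (t + C) h]
  have key : ∀ s ∈ Ico (t+C+1) (t+C+h+1), EE n a t ≤ EE n a s := by
    intro s hs
    rw [Finset.mem_Ico] at hs
    have h1 : C ≤ s - t := by omega
    have h2 : t + (s - t) = s := by omega
    have := EE_mono ha (hC (s - t) h1) t
    rwa [h2] at this
  have hcard : (Ico (t+C+1) (t+C+h+1)).card = h := by
    rw [Nat.card_Ico]
    omega
  have := Finset.card_nsmul_le_sum (Ico (t+C+1) (t+C+h+1)) (fun s => EE n a s) (EE n a t) key
  rw [hcard, smul_eq_mul, Nat.mul_comm h (EE n a t)] at this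
  omega

/-- Lower counting estimate. -/
theorem count_lower {n : ℕ} {a : Fin n → ℕ} (ha : ∀ i, 0 < a i) {C : ℕ}
    (hC : ∀ s : ℕ, C ≤ s → Rep n a s) (t' h : ℕ) :
    FF n a (t' + h) ≤ EE n a (t' + h + C) * h + FF n a t' := by
  rw [FF_split ha t' h]
  have key : ∀ s ∈ Ico (t'+1) (t'+h+1), EE n a s ≤ EE n a (t' + h + C) := by
    intro s hs
    rw [Finset.mem_Ico] at hs
    have h1 : C ≤ t' + h + C - s := by omega
    have h2 : s + (t' + h + C - s) = t' + h + C := by omega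
    have := EE_mono ha (hC (t' + h + C - s) h1) s
    rwa [h2] at this
  have hcard : (Ico (t'+1) (t'+h+1)).card = h := by
    rw [Nat.card_Ico]
    omega
  have := Finset.sum_le_card_nsmul (Ico (t'+1) (t'+h+1)) (fun s => EE n a s) (EE n a (t' + h + C)) key
  rw [hcard, smul_eq_mul, Nat.mul_comm h (EE n a (t' + h + C))] at this
  omega

set_option maxHeartbeats 1000000 in
theorem schur_main (N : ℕ) (hN : 1 ≤ N) (a : Fin (N + 1) → ℕ) (ha : ∀ i, 0 < a i)
    (hgcd : Finset.univ.gcd a = 1) :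
    Tendsto
      (fun t : ℕ =>
        ((Nat.card {x : Fin (N + 1) → ℕ // ∑ i, a i * x i = t} : ℝ) *
          (Nat.factorial N : ℝ) * ∏ i, (a i : ℝ)) / (t : ℝ) ^ N)
      atTop (nhds 1) := by
  classical
  set P : ℝ := ∏ i, (a i : ℝ) with hPdef
  have hP : 0 < P := Finset.prod_pos fun i _ => by exact_mod_cast ha i
  obtain ⟨C, hC⟩ := exists_rep_bound a hgcd
  set cN : ℕ := ∑ i, a i with hcNdef
  have hcsum : ∑ i, (a i:ℝ) = (cN:ℝ) := by rw [hcNdef]; push_cast; rfl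
  set f : ℕ → ℝ := fun t => (EE (N+1) a t : ℝ) * N.factorial * P / (t:ℝ)^N with hfdef
  show Tendsto f atTop (nhds 1)
  have hfactR : (((N+1).factorial : ℕ) : ℝ) = (N+1) * N.factorial := by
    rw [Nat.factorial_succ]; push_cast; ring
  -- main per-δ estimate
  have main : ∀ δ : ℝ, 0 < δ → δ ≤ 1/2 →
      ∃ U V : ℕ → ℝ,
        Tendsto U atTop (nhds ((1+δ)^N)) ∧ Tendsto V atTop (nhds ((1-δ)^N)) ∧
        (∀ᶠ t : ℕ in atTop, f t ≤ U t) ∧ (∀ᶠ t : ℕ in atTop, V t ≤ f t) := by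
    intro δ hδ0 hδhalf
    set h : ℕ → ℕ := fun t => cN + 1 + ⌈δ * t⌉₊ with hhdef
    have hh_pos : ∀ t, 0 < h t := fun t => by
      have : h t = cN + 1 + ⌈δ * t⌉₊ := rfl
      omega
    have hhR : ∀ t : ℕ, (0:ℝ) < h t := fun t => by exact_mod_cast hh_pos t
    have hh_lb : ∀ t : ℕ, δ * t ≤ (h t : ℝ) := by
      intro t
      have h1 : δ * t ≤ (⌈δ * t⌉₊ : ℝ) := Nat.le_ceil _
      have h2 : ((⌈δ * t⌉₊ : ℕ) : ℝ) ≤ (h t : ℝ) := by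
        have h0 : h t = cN + 1 + ⌈δ * t⌉₊ := rfl
        have : ⌈δ * t⌉₊ ≤ h t := by omega
        exact_mod_cast this
      linarith
    have hh_ub : ∀ t : ℕ, (h t : ℝ) ≤ cN + 2 + δ * t := by
      intro t
      have h1 : (⌈δ * t⌉₊ : ℝ) < δ * t + 1 :=
        Nat.ceil_lt_add_one (by positivity)
      have h0 : h t = cN + 1 + ⌈δ * t⌉₊ := rfl
      have h2 : (h t : ℝ) = cN + 1 + (⌈δ * t⌉₊ : ℝ) := by rw [h0]; push_cast; ring
      linarith
    have hh_atTop : Tendsto (fun t : ℕ => (h t : ℝ)) atTop atTop := by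
      apply tendsto_atTop_mono hh_lb
      exact Tendsto.const_mul_atTop hδ0 (tendsto_natCast_atTop_atTop)
    have hht : Tendsto (fun t : ℕ => (h t : ℝ)/t) atTop (nhds δ) := by
      apply tendsto_of_tendsto_of_tendsto_of_le_of_le'
        (tendsto_const_nhds : Tendsto (fun _ : ℕ => δ) atTop (nhds δ))
        (show Tendsto (fun t : ℕ => δ + ((cN:ℝ) + 2)/t) atTop (nhds δ) by
          have := (tendsto_const_nhds (x := δ) (f := atTop (α := ℕ))).add
            (tendsto_const_div_atTop_nhds_zero_nat ((cN:ℝ) + 2))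
          rwa [add_zero] at this)
      · filter_upwards [eventually_gt_atTop 0] with t ht
        have htR : (0:ℝ) < t := by exact_mod_cast ht
        rw [le_div_iff₀ htR]
        calc δ * t ≤ (h t : ℝ) := hh_lb t
          _ = _ := by ring_nf
      · filter_upwards [eventually_gt_atTop 0] with t ht
        have htR : (0:ℝ) < t := by exact_mod_cast ht
        rw [div_le_iff₀ htR]
        calc (h t : ℝ) ≤ cN + 2 + δ * t := hh_ub t
          _ = (δ + ((cN:ℝ) + 2)/t) * t := by field_simp; ring
    have hcdiv : Tendsto (fun t : ℕ => (cN:ℝ)/h t) atTop (nhds 0) :=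
      Tendsto.div_atTop tendsto_const_nhds hh_atTop
    -- second factors
    have hU2 : Tendsto (fun t : ℕ => ((h t:ℝ) + cN)/h t) atTop (nhds 1) := by
      have l1 : Tendsto (fun t : ℕ => 1 + (cN:ℝ)/h t) atTop (nhds (1+0)) :=
        tendsto_const_nhds.add hcdiv
      rw [add_zero] at l1
      apply l1.congr
      intro t
      have := (hhR t).ne'
      field_simp
    have hV2 : Tendsto (fun t : ℕ => ((h t:ℝ) - cN)/h t) atTop (nhds 1) := by
      have l1 : Tendsto (fun t : ℕ => 1 - (cN:ℝ)/h t) atTop (nhds (1-0)) :=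
        tendsto_const_nhds.sub hcdiv
      rw [sub_zero] at l1
      apply l1.congr
      intro t
      have := (hhR t).ne'
      field_simp
    -- first factors
    have hU1 : Tendsto (fun t : ℕ => ((t:ℝ)+C+h t+cN)/t) atTop (nhds (1+δ)) := by
      have l1 : Tendsto (fun t : ℕ => 1 + ((C:ℝ)+cN)/t + (h t:ℝ)/t) atTop
          (nhds (1 + 0 + δ)) :=
        (tendsto_const_nhds.add (tendsto_const_div_atTop_nhds_zero_nat _)).add hht
      rw [add_zero] at l1
      apply l1.congr'
      filter_upwards [eventually_gt_atTop 0] with t ht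
      have htR : (t:ℝ) ≠ 0 := Nat.cast_ne_zero.mpr ht.ne'
      field_simp
      ring
    have hV1 : Tendsto (fun t : ℕ => ((t:ℝ)-C-h t+cN)/t) atTop (nhds (1-δ)) := by
      have l1 : Tendsto (fun t : ℕ => 1 + ((cN:ℝ)-C)/t - (h t:ℝ)/t) atTop
          (nhds (1 + 0 - δ)) :=
        (tendsto_const_nhds.add (tendsto_const_div_atTop_nhds_zero_nat _)).sub hht
      rw [add_zero] at l1
      apply l1.congr'
      filter_upwards [eventually_gt_atTop 0] with t ht
      have htR : (t:ℝ) ≠ 0 := Nat.cast_ne_zero.mpr ht.ne'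
      field_simp
      ring
    refine ⟨fun t => (((t:ℝ)+C+h t+cN)/t)^N * (((h t:ℝ) + cN)/h t),
      fun t => (((t:ℝ)-C-h t+cN)/t)^N * (((h t:ℝ) - cN)/h t), ?_, ?_, ?_, ?_⟩
    · have := (hU1.pow N).mul hU2
      rwa [mul_one] at this
    · have := (hV1.pow N).mul hV2
      rwa [mul_one] at this
    · -- upper eventual bound
      filter_upwards [eventually_gt_atTop 0] with t ht
      have htR : (0:ℝ) < t := by exact_mod_cast ht
      have hcount := count_upper ha hC t (h t)
      have hcountR : (EE (N+1) a t : ℝ) * h t + (FF (N+1) a (t + C) : ℝ)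
          ≤ (FF (N+1) a (t + C + h t) : ℝ) := by exact_mod_cast hcount
      have hb1 := (FF_bounds a ha (t + C)).1
      have hb2 := (FF_bounds a ha (t + C + h t)).2
      rw [← hPdef] at hb1
      rw [hcsum, ← hPdef] at hb2
      set x : ℝ := (t:ℝ) + C + h t + cN with hxdef
      set y : ℝ := (t:ℝ) + C with hydef
      have hx1 : ((t + C + h t : ℕ) : ℝ) + cN = x := by rw [hxdef]; push_cast; ring
      have hy1 : ((t + C : ℕ) : ℝ) = y := by rw [hydef]; push_cast; ring
      rw [hx1] at hb2
      rw [hy1] at hb1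
      have hy0 : 0 ≤ y := by rw [hydef]; positivity
      have hyx : y ≤ x := by
        rw [hxdef, hydef]
        have := (hhR t).le
        have : (0:ℝ) ≤ cN := Nat.cast_nonneg _
        nlinarith [hhR t]
      have hpow := pow_sub_pow_le_upper hy0 hyx N
      have hxy : x - y = (h t : ℝ) + cN := by rw [hxdef, hydef]; ring
      rw [hxy] at hpow
      -- combine
      have hKpos : (0:ℝ) < ((N+1).factorial : ℝ) * P := by positivity
      have step1 : (EE (N+1) a t : ℝ) * h t * (((N+1).factorial : ℝ) * P)
          ≤ x^(N+1) - y^(N+1) := by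
        have e1 : (EE (N+1) a t : ℝ) * h t
            ≤ (FF (N+1) a (t + C + h t) : ℝ) - (FF (N+1) a (t + C) : ℝ) := by linarith
        have e2 := mul_le_mul_of_nonneg_right e1 hKpos.le
        have e3 : ((FF (N+1) a (t + C + h t) : ℝ) - (FF (N+1) a (t + C) : ℝ))
            * (((N+1).factorial : ℝ) * P) ≤ x^(N+1) - y^(N+1) := by
          have u1 : (FF (N+1) a (t + C + h t) : ℝ) * ((N+1).factorial : ℝ) * P ≤ x^(N+1) := hb2
          have u2 : y^(N+1) ≤ (FF (N+1) a (t + C) : ℝ) * ((N+1).factorial : ℝ) * P := hb1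
          nlinarith [u1, u2]
        linarith
      -- cancel (N+1) and divide
      have step2 : (EE (N+1) a t : ℝ) * N.factorial * P * h t ≤ x^N * ((h t:ℝ) + cN) := by
        have hN1 : (0:ℝ) < (N:ℝ)+1 := by positivity
        rw [hfactR] at step1
        apply le_of_mul_le_mul_left _ hN1
        calc ((N:ℝ)+1) * ((EE (N+1) a t : ℝ) * N.factorial * P * h t)
            = (EE (N+1) a t : ℝ) * h t * (((N:ℝ)+1) * N.factorial * P) := by ring
          _ ≤ x^(N+1) - y^(N+1) := by
              have : (((N:ℝ)+1) * (N.factorial:ℝ)) * P = ((N:ℝ)+1) * N.factorial * P := by ring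
              linarith [step1]
          _ ≤ ((N:ℝ)+1) * x^N * ((h t:ℝ) + cN) := hpow
          _ = ((N:ℝ)+1) * (x^N * ((h t:ℝ) + cN)) := by ring
      show f t ≤ (x/t)^N * (((h t:ℝ) + cN)/h t)
      rw [hfdef]
      rw [div_le_iff₀ (by positivity : (0:ℝ) < (t:ℝ)^N)]
      have hfin : (x/t)^N * (((h t:ℝ) + cN)/h t) * (t:ℝ)^N
          = x^N * ((h t:ℝ) + cN) / h t := by
        have := htR.ne'
        have := (hhR t).ne'
        rw [div_pow]
        field_simp
      rw [hfin, le_div_iff₀ (hhR t)]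
      exact step2
    · -- lower eventual bound
      have hev : ∀ᶠ t : ℕ in atTop, C + h t ≤ t ∧ 0 < t := by
        filter_upwards [eventually_ge_atTop (2*(C + cN + 2) + 1)] with t ht
        have htR : ((2*(C + cN + 2) + 1 : ℕ) : ℝ) ≤ t := by exact_mod_cast ht
        have h1 : (h t : ℝ) ≤ cN + 2 + δ * t := hh_ub t
        have h2 : δ * t ≤ t/2 := by nlinarith [Nat.cast_nonneg (α := ℝ) t]
        have h3 : ((C:ℝ) + h t) ≤ t := by push_cast at htR ⊢; nlinarith
        constructor
        · exact_mod_cast h3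
        · omega
      filter_upwards [hev] with t htt
      obtain ⟨hCh, ht⟩ := htt
      have htR : (0:ℝ) < t := by exact_mod_cast ht
      set t' : ℕ := t - (C + h t) with ht'def
      have ht'sum : t' + h t + C = t := by omega
      have hcount := count_lower ha hC t' (h t)
      rw [ht'sum] at hcount
      have hcountR : (FF (N+1) a (t' + h t) : ℝ)
          ≤ (EE (N+1) a t : ℝ) * h t + (FF (N+1) a t' : ℝ) := by exact_mod_cast hcount
      have hb1 := (FF_bounds a ha (t' + h t)).1
      have hb2 := (FF_bounds a ha t').2
      rw [← hPdef] at hb1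
      rw [hcsum, ← hPdef] at hb2
      set x : ℝ := (t':ℝ) + h t with hxdef
      set y : ℝ := (t':ℝ) + cN with hydef
      have hx1 : ((t' + h t : ℕ) : ℝ) = x := by rw [hxdef]; push_cast; ring
      rw [hx1] at hb1
      have hy0 : 0 ≤ y := by rw [hydef]; positivity
      have hyx : y ≤ x := by
        rw [hxdef, hydef]
        have : (cN:ℝ) + 1 ≤ h t := by
          have h0 : h t = cN + 1 + ⌈δ * t⌉₊ := rfl
          have : cN + 1 ≤ h t := by omega
          exact_mod_cast this
        linarith
      have hpow := pow_sub_pow_le_lower hy0 hyx N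
      have hxy : x - y = (h t : ℝ) - cN := by rw [hxdef, hydef]; ring
      rw [hxy] at hpow
      have hKpos : (0:ℝ) < ((N+1).factorial : ℝ) * P := by positivity
      have step1 : x^(N+1) - y^(N+1)
          ≤ (EE (N+1) a t : ℝ) * h t * (((N+1).factorial : ℝ) * P) := by
        have e1 : (FF (N+1) a (t' + h t) : ℝ) - (FF (N+1) a t' : ℝ)
            ≤ (EE (N+1) a t : ℝ) * h t := by linarith
        nlinarith [hb1, hb2, mul_le_mul_of_nonneg_right e1 hKpos.le]
      have step2 : y^N * ((h t:ℝ) - cN) ≤ (EE (N+1) a t : ℝ) * N.factorial * P * h t := by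
        have hN1 : (0:ℝ) < (N:ℝ)+1 := by positivity
        rw [hfactR] at step1
        apply le_of_mul_le_mul_left _ hN1
        calc ((N:ℝ)+1) * (y^N * ((h t:ℝ) - cN))
            = ((N:ℝ)+1) * y^N * ((h t:ℝ) - cN) := by ring
          _ ≤ x^(N+1) - y^(N+1) := hpow
          _ ≤ (EE (N+1) a t : ℝ) * h t * (((N:ℝ)+1) * N.factorial * P) := by
              linarith [step1]
          _ = ((N:ℝ)+1) * ((EE (N+1) a t : ℝ) * N.factorial * P * h t) := by ring
      have ht'R : (t' : ℝ) = (t:ℝ) - C - h t := by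
        have : ((t - (C + h t) : ℕ) : ℝ) = (t:ℝ) - ((C + h t : ℕ):ℝ) := by
          rw [Nat.cast_sub hCh]
        rw [ht'def, this]
        push_cast
        ring
      show (((t:ℝ)-C-h t+cN)/t)^N * (((h t:ℝ) - cN)/h t) ≤ f t
      rw [hfdef]
      rw [le_div_iff₀ (by positivity : (0:ℝ) < (t:ℝ)^N)]
      have hfin : (((t:ℝ)-C-h t+cN)/t)^N * (((h t:ℝ) - cN)/h t) * (t:ℝ)^N
          = ((t:ℝ)-C-h t+cN)^N * ((h t:ℝ) - cN) / h t := by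
        have := htR.ne'
        have := (hhR t).ne'
        rw [div_pow]
        field_simp
      rw [hfin, div_le_iff₀ (hhR t)]
      have hyy : ((t:ℝ)-C-h t+cN) = y := by rw [hydef, ht'R]
      rw [hyy]
      exact step2
  -- conclude by tendsto_order
  rw [tendsto_order]
  constructor
  · intro b hb
    have hcont : Tendsto (fun δ : ℝ => (1-δ)^N) (nhds 0) (nhds 1) := by
      have h1 := (((continuous_const (y := (1:ℝ))).sub continuous_id).pow N).tendsto (0:ℝ)
      simpa [Pi.pow_def, Pi.sub_def] using h1
    have hev : ∀ᶠ δ in nhds (0:ℝ), b < (1-δ)^N := hcont.eventually (eventually_gt_nhds hb)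
    obtain ⟨ε, hε0, hε⟩ := Metric.eventually_nhds_iff.mp hev
    set δ := min (ε/2) (1/2) with hδdef
    have hδ0 : 0 < δ := by positivity
    have hδhalf : δ ≤ 1/2 := min_le_right _ _
    have hδb : b < (1-δ)^N := by
      apply hε
      rw [Real.dist_eq, sub_zero, abs_of_pos hδ0]
      calc δ ≤ ε/2 := min_le_left _ _
        _ < ε := by linarith
    obtain ⟨U, V, hU, hV, hfU, hVf⟩ := main δ hδ0 hδhalf
    have h1 : ∀ᶠ t : ℕ in atTop, b < V t := hV.eventually (eventually_gt_nhds hδb)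
    filter_upwards [h1, hVf] with t ht1 ht2
    linarith
  · intro b hb
    have hcont : Tendsto (fun δ : ℝ => (1+δ)^N) (nhds 0) (nhds 1) := by
      have h1 := (((continuous_const (y := (1:ℝ))).add continuous_id).pow N).tendsto (0:ℝ)
      simpa [Pi.pow_def, Pi.add_def] using h1
    have hev : ∀ᶠ δ in nhds (0:ℝ), (1+δ)^N < b := hcont.eventually (eventually_lt_nhds hb)
    obtain ⟨ε, hε0, hε⟩ := Metric.eventually_nhds_iff.mp hev
    set δ := min (ε/2) (1/2) with hδdef
    have hδ0 : 0 < δ := by positivity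
    have hδhalf : δ ≤ 1/2 := min_le_right _ _
    have hδb : (1+δ)^N < b := by
      apply hε
      rw [Real.dist_eq, sub_zero, abs_of_pos hδ0]
      calc δ ≤ ε/2 := min_le_left _ _
        _ < ε := by linarith
    obtain ⟨U, V, hU, hV, hfU, hVf⟩ := main δ hδ0 hδhalf
    have h1 : ∀ᶠ t : ℕ in atTop, U t < b := hU.eventually (eventually_lt_nhds hδb)
    filter_upwards [h1, hfU] with t ht1 ht2
    linarith

end SchurAux

/-- Schur: if `gcd(α₁,…,α_{N+1}) = 1`, then
`E(α)(t) · N! · α₁⋯α_{N+1} / t^N → 1` as `t → ∞`. -/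
theorem stmt_3 (N : ℕ) (hN : 1 ≤ N) (a : Fin (N + 1) → ℕ) (ha : ∀ i, 0 < a i)
    (hgcd : Finset.univ.gcd a = 1) :
    Tendsto
      (fun t : ℕ =>
        ((Nat.card {x : Fin (N + 1) → ℕ // ∑ i, a i * x i = t} : ℝ) *
          (Nat.factorial N : ℝ) * ∏ i, (a i : ℝ)) / (t : ℝ) ^ N)
      atTop (nhds 1) :=
  SchurAux.schur_main N hN a ha hgcd
end

section
/- If the positive integers α₁,…,α_{N+1} have gcd 1, then there exists F ∈ ℕ such that E(α)(t) > 0 for all integers t ≥ F. -/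
lemma bezout_finset {ι : Type*} [DecidableEq ι] (f : ι → ℕ) (s : Finset ι) :
    ∃ c : ι → ℤ, ∑ i ∈ s, (f i : ℤ) * c i = ((s.gcd f : ℕ) : ℤ) := by
  induction s using Finset.induction_on with
  | empty => exact ⟨0, by simp⟩
  | @insert a s hanotin ih =>
    obtain ⟨c, hc⟩ := ih
    set g := s.gcd f with hg
    refine ⟨fun i => if i = a then Nat.gcdA (f a) g else c i * Nat.gcdB (f a) g, ?_⟩
    rw [Finset.sum_insert hanotin, Finset.gcd_insert]
    have hb := Nat.gcd_eq_gcd_ab (f a) g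
    simp only [if_pos rfl]
    rw [Finset.sum_congr rfl (fun i hi => by
      rw [if_neg (by rintro rfl; exact hanotin hi)])]
    rw [show ∑ i ∈ s, (f i : ℤ) * (c i * Nat.gcdB (f a) g)
        = (∑ i ∈ s, (f i : ℤ) * c i) * Nat.gcdB (f a) g by
      rw [Finset.sum_mul]; exact Finset.sum_congr rfl fun i _ => by ring]
    rw [hc, ← hg, show gcd (f a) g = Nat.gcd (f a) g from rfl, hb]
    simp

/-- If `gcd(α₁,…,α_{N+1}) = 1`, then there exists `F` such that
`E(α)(t) > 0` for all `t ≥ F`. -/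
theorem stmt_4 (N : ℕ) (a : Fin (N + 1) → ℕ) (ha : ∀ i, 0 < a i)
    (hgcd : Finset.univ.gcd a = 1) :
    ∃ F : ℕ, ∀ t : ℕ, F ≤ t →
      0 < Nat.card {x : Fin (N + 1) → ℕ // ∑ i, a i * x i = t} := by
  obtain ⟨c, hc⟩ := bezout_finset a Finset.univ
  rw [hgcd] at hc
  push_cast at hc
  set u : Fin (N+1) → ℕ := fun i => (c i).toNat with hu
  set v : Fin (N+1) → ℕ := fun i => (-(c i)).toNat with hv
  set p : ℕ := ∑ i, a i * u i with hp
  set q : ℕ := ∑ i, a i * v i with hq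
  have hpq : p = q + 1 := by
    have h1 : (p : ℤ) - q = 1 := by
      push_cast [hp, hq]
      rw [← Finset.sum_sub_distrib, ← hc]
      refine Finset.sum_congr rfl fun i _ => ?_
      have h2 : ((c i).toNat : ℤ) - ((-(c i)).toNat : ℤ) = c i := by
        rcases le_or_gt 0 (c i) with h | h
        · simp [Int.toNat_of_nonneg h, Int.toNat_of_nonpos (by omega : -(c i) ≤ 0)]
        · rw [Int.toNat_of_nonpos (le_of_lt h), Int.toNat_of_nonneg (by omega)]; ring
      rw [← h2]; ring
    omega
  set d := a 0 with hd
  have hd0 : 0 < d := ha 0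
  refine ⟨d * (q + 1), fun t ht => ?_⟩
  set r := t % d with hr
  have hrd : r < d := Nat.mod_lt _ hd0
  set A := t / d with hA
  have htq : q + 1 ≤ A := (Nat.le_div_iff_mul_le hd0).2 (by rw [mul_comm]; exact ht)
  set m := A - q with hm
  set x : Fin (N+1) → ℕ := fun i => r * u i + (d - r) * v i + (if i = 0 then m else 0)
    with hx
  have h5 : q ≤ A := by omega
  have hsum : ∑ i, a i * x i = t := by
    have e1 : ∑ i, a i * (r * u i) = r * p := by
      rw [hp, Finset.mul_sum]; exact Finset.sum_congr rfl fun i _ => by ring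
    have e2 : ∑ i, a i * ((d - r) * v i) = (d - r) * q := by
      rw [hq, Finset.mul_sum]; exact Finset.sum_congr rfl fun i _ => by ring
    have e3 : ∑ i : Fin (N+1), a i * (if i = 0 then m else 0) = d * m := by
      simp only [mul_ite, mul_zero]
      rw [Finset.sum_ite_eq' Finset.univ (0 : Fin (N+1)) (fun i => a i * m)]
      simp [hd]
    have expand : ∑ i, a i * x i
        = ∑ i, a i * (r * u i) + ∑ i, a i * ((d - r) * v i)
          + ∑ i : Fin (N+1), a i * (if i = 0 then m else 0) := by
      rw [← Finset.sum_add_distrib, ← Finset.sum_add_distrib]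
      exact Finset.sum_congr rfl fun i _ => by rw [hx]; ring
    rw [expand, e1, e2, e3, hpq]
    have h3 : d * A + r = t := by rw [hA]; exact Nat.div_add_mod t d
    have h3' : (d : ℤ) * (A : ℤ) + (r : ℤ) = (t : ℤ) := by exact_mod_cast h3
    rw [hm]
    zify [hrd.le, h5]
    linear_combination h3'
  have hne : Nonempty {x : Fin (N + 1) → ℕ // ∑ i, a i * x i = t} := ⟨⟨x, hsum⟩⟩
  have hfin : Finite {x : Fin (N + 1) → ℕ // ∑ i, a i * x i = t} := by
    have key : ∀ (y : {x : Fin (N + 1) → ℕ // ∑ i, a i * x i = t}) (i : Fin (N+1)),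
        y.1 i < t + 1 := by
      intro y i
      have h6 : a i * y.1 i ≤ ∑ j, a j * y.1 j :=
        Finset.single_le_sum (f := fun j => a j * y.1 j) (fun j _ => Nat.zero_le _)
          (Finset.mem_univ i)
      rw [y.2] at h6
      have h7 : y.1 i ≤ a i * y.1 i := Nat.le_mul_of_pos_left _ (ha i)
      omega
    refine Finite.of_injective (fun y => fun i => (⟨y.1 i, key y i⟩ : Fin (t+1))) ?_
    intro y z h
    ext i
    exact congrArg Fin.val (congrFun h i)
  exact Nat.card_pos
end

section
/- For the list α = [6,2,3], the denumerant satisfies E(α)(t) = t²/72 + (1/4 − {−t/3}/6 − {t/2}/6)·t + (1 − (3/2){−t/3} − (3/2){t/2} + (1/2){−t/3}² + {−t/3}{t/2} + (1/2){t/2}²) for all non-negative integers t, where {s} = s − ⌊s⌋. -/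
open Finset

def Pf (m : ℕ) : Finset (ℕ × ℕ) :=
  (range (m+1) ×ˢ range (m+1)).filter (fun p => 2*p.1 + 3*p.2 = m)

def Tf (t : ℕ) : Finset (ℕ × ℕ × ℕ) :=
  (range (t+1) ×ˢ range (t+1) ×ˢ range (t+1)).filter
    (fun p => 6*p.1 + 2*p.2.1 + 3*p.2.2 = t)

lemma Pf_succ (m : ℕ) :
    Pf (m+6) = insert (if m % 2 = 0 then ((m+6)/2, 0) else ((m+3)/2, 1))
      ((Pf m).image (fun p => (p.1, p.2+2))) := by
  ext ⟨a, b⟩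
  simp only [Pf, mem_insert, mem_image, mem_filter, mem_product, mem_range, Prod.mk.injEq,
    Prod.exists]
  rcases Nat.mod_two_eq_zero_or_one m with h | h <;> simp only [h] <;>
    constructor
  · rintro ⟨⟨ha, hb⟩, he⟩
    rcases Nat.lt_or_ge b 2 with hb2 | hb2
    · left; norm_num; omega
    · right; exact ⟨a, b - 2, ⟨⟨by omega, by omega⟩, by omega⟩, rfl, by omega⟩
  · rintro (he | ⟨x, y, ⟨⟨hx, hy⟩, hxy⟩, rfl, rfl⟩)
    · norm_num at he; omega
    · omega
  · rintro ⟨⟨ha, hb⟩, he⟩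
    rcases Nat.lt_or_ge b 2 with hb2 | hb2
    · left; norm_num; omega
    · right; exact ⟨a, b - 2, ⟨⟨by omega, by omega⟩, by omega⟩, rfl, by omega⟩
  · rintro (he | ⟨x, y, ⟨⟨hx, hy⟩, hxy⟩, rfl, rfl⟩)
    · norm_num at he; omega
    · omega

lemma Pf_card_succ (m : ℕ) : (Pf (m+6)).card = (Pf m).card + 1 := by
  rw [Pf_succ, card_insert_of_notMem, card_image_of_injective]
  · intro p q hpq
    simp only [Prod.mk.injEq] at hpq
    exact Prod.ext hpq.1 (by omega)
  · intro hmem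
    simp only [mem_image, Prod.exists] at hmem
    rcases Nat.mod_two_eq_zero_or_one m with h | h <;> simp [h] at hmem <;>
      obtain ⟨x, y, _, _, hy⟩ := hmem <;> omega

lemma Tf_succ (t : ℕ) :
    Tf (t+6) = ((Tf t).image (fun p => (p.1+1, p.2))) ∪
      ((Pf (t+6)).image (fun q => ((0 : ℕ), q))) := by
  ext ⟨a, b, c⟩
  simp only [Tf, Pf, mem_union, mem_image, mem_filter, mem_product, mem_range, Prod.mk.injEq,
    Prod.exists]
  constructor
  · rintro ⟨⟨ha, hb, hc⟩, he⟩
    rcases Nat.eq_zero_or_pos a with h0 | h1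
    · right; exact ⟨b, c, ⟨⟨by omega, by omega⟩, by omega⟩, by omega, rfl, rfl⟩
    · left; exact ⟨a - 1, b, c, ⟨⟨by omega, by omega, by omega⟩, by omega⟩, by omega, rfl, rfl⟩
  · rintro (⟨x, y, z, ⟨⟨hx, hy, hz⟩, he⟩, rfl, rfl, rfl⟩ | ⟨y, z, ⟨⟨hy, hz⟩, he⟩, rfl, rfl, rfl⟩) <;>
      refine ⟨⟨by omega, by omega, by omega⟩, by omega⟩

lemma Tf_card_succ (t : ℕ) : (Tf (t+6)).card = (Tf t).card + (Pf (t+6)).card := by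
  rw [Tf_succ, card_union_of_disjoint, card_image_of_injective, card_image_of_injective]
  · intro p q hpq
    simpa [Prod.ext_iff] using hpq
  · intro p q hpq
    simp only [Prod.mk.injEq] at hpq
    exact Prod.ext (by omega) hpq.2
  · simp only [disjoint_left, mem_image, Prod.exists]
    rintro p ⟨x, y, z, _, rfl⟩ ⟨y', z', _, hp⟩
    simp at hp

lemma Pf_card (m : ℕ) : (Pf m).card = m/6 + (if m % 6 = 1 then 0 else 1) := by
  induction m using Nat.strong_induction_on with
  | _ m ih =>
    match m with
    | 0 => decide
    | 1 => decide
    | 2 => decide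
    | 3 => decide
    | 4 => decide
    | 5 => decide
    | (k+6) =>
      rw [Pf_card_succ, ih k (by omega)]
      have h6 : (k+6) % 6 = k % 6 := Nat.add_mod_right k 6
      by_cases h : k % 6 = 1 <;> simp [h, h6] <;> omega

lemma Tf_card (t : ℕ) :
    (Tf t).card = if t % 6 = 1 then (t/6)*(t/6+1)/2 else (t/6+1)*(t/6+2)/2 := by
  induction t using Nat.strong_induction_on with
  | _ t ih =>
    match t with
    | 0 => decide
    | 1 => decide
    | 2 => decide
    | 3 => decide
    | 4 => decide
    | 5 => decide
    | (k+6) =>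
      rw [Tf_card_succ, ih k (by omega), Pf_card]
      have h6 : (k+6) % 6 = k % 6 := Nat.add_mod_right k 6
      have h6' : (k+6) / 6 = k / 6 + 1 := by omega
      by_cases h : k % 6 = 1 <;> simp only [h, h6, h6', if_true, if_false]
      · have h1 : (k/6+1)*(k/6+1+1) = k/6*(k/6+1) + 2*(k/6+1) := by ring
        obtain ⟨a, ha⟩ : 2 ∣ k/6*(k/6+1) := (Nat.even_mul_succ_self (k/6)).two_dvd
        omega
      · have h1 : (k/6+1+1)*(k/6+1+2) = (k/6+1)*(k/6+2) + 2*(k/6+2) := by ring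
        obtain ⟨a, ha⟩ : 2 ∣ (k/6+1)*(k/6+2) := (Nat.even_mul_succ_self (k/6+1)).two_dvd
        omega

def tripleEquiv (t : ℕ) :
    {x : Fin 3 → ℕ // 6 * x 0 + 2 * x 1 + 3 * x 2 = t} ≃
      {p : ℕ × ℕ × ℕ // 6 * p.1 + 2 * p.2.1 + 3 * p.2.2 = t} where
  toFun x := ⟨(x.1 0, x.1 1, x.1 2), x.2⟩
  invFun p := ⟨![p.1.1, p.1.2.1, p.1.2.2], by
    simpa using p.2⟩
  left_inv x := by
    ext i
    fin_cases i <;> rfl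
  right_inv p := rfl

lemma card_eq (t : ℕ) :
    Nat.card {x : Fin 3 → ℕ // 6 * x 0 + 2 * x 1 + 3 * x 2 = t} = (Tf t).card := by
  rw [Nat.card_congr (tripleEquiv t)]
  have hset : {p : ℕ × ℕ × ℕ | 6 * p.1 + 2 * p.2.1 + 3 * p.2.2 = t} = ↑(Tf t) := by
    ext ⟨a, b, c⟩
    simp only [Set.mem_setOf_eq, coe_filter, mem_product, mem_range, Tf, Set.mem_setOf_eq,
      mem_coe, mem_filter]
    omega
  calc Nat.card {p : ℕ × ℕ × ℕ // 6 * p.1 + 2 * p.2.1 + 3 * p.2.2 = t}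
      = Nat.card {p : ℕ × ℕ × ℕ | 6 * p.1 + 2 * p.2.1 + 3 * p.2.2 = t} := rfl
    _ = (Tf t).card := by
        rw [hset, Nat.card_coe_set_eq, Set.ncard_coe_finset]

lemma cast_half (n : ℕ) (h : 2 ∣ n) : ((n / 2 : ℕ) : ℝ) = (n : ℝ) / 2 := by
  obtain ⟨a, rfl⟩ := h
  rw [Nat.mul_div_cancel_left _ two_pos]
  push_cast
  ring

lemma fract_eq (x c : ℝ) (z : ℤ) (h : x = z + c) (h0 : 0 ≤ c) (h1 : c < 1) :
    Int.fract x = c := by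
  rw [h, Int.fract_intCast_add, Int.fract_eq_self.2 ⟨h0, h1⟩]

/-- Explicit step-polynomial formula for the denumerant of `α = [6,2,3]`. -/
theorem stmt_6 (t : ℕ) :
    (Nat.card {x : Fin 3 → ℕ // 6 * x 0 + 2 * x 1 + 3 * x 2 = t} : ℝ) =
      (t : ℝ) ^ 2 / 72 +
      (1 / 4 - Int.fract (-(t : ℝ) / 3) / 6 - Int.fract ((t : ℝ) / 2) / 6) * (t : ℝ) +
      (1 - 3 / 2 * Int.fract (-(t : ℝ) / 3) - 3 / 2 * Int.fract ((t : ℝ) / 2)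
        + 1 / 2 * Int.fract (-(t : ℝ) / 3) ^ 2
        + Int.fract (-(t : ℝ) / 3) * Int.fract ((t : ℝ) / 2)
        + 1 / 2 * Int.fract ((t : ℝ) / 2) ^ 2) := by
  obtain ⟨q, r, hr, rfl⟩ : ∃ q r, r < 6 ∧ t = 6 * q + r := ⟨t / 6, t % 6, by omega, by omega⟩
  rw [card_eq, Tf_card]
  have hm : (6 * q + r) % 6 = r := by omega
  have hd : (6 * q + r) / 6 = q := by omega
  rw [hm, hd]
  interval_cases r
  · rw [if_neg (by norm_num)]
    have f3 : Int.fract (-((6*q+0 : ℕ) : ℝ) / 3) = 0 :=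
      fract_eq _ _ (-2*q) (by push_cast; ring) le_rfl one_pos
    have f2 : Int.fract (((6*q+0 : ℕ) : ℝ) / 2) = 0 :=
      fract_eq _ _ (3*q) (by push_cast; ring) le_rfl one_pos
    rw [f3, f2, cast_half _ (Nat.even_mul_succ_self (q+1)).two_dvd]
    push_cast
    ring
  · rw [if_pos rfl]
    have f3 : Int.fract (-((6*q+1 : ℕ) : ℝ) / 3) = 2/3 :=
      fract_eq _ _ (-2*q - 1) (by push_cast; ring) (by norm_num) (by norm_num)
    have f2 : Int.fract (((6*q+1 : ℕ) : ℝ) / 2) = 1/2 :=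
      fract_eq _ _ (3*q) (by push_cast; ring) (by norm_num) (by norm_num)
    rw [f3, f2, cast_half _ (Nat.even_mul_succ_self q).two_dvd]
    push_cast
    ring
  · rw [if_neg (by norm_num)]
    have f3 : Int.fract (-((6*q+2 : ℕ) : ℝ) / 3) = 1/3 :=
      fract_eq _ _ (-2*q - 1) (by push_cast; ring) (by norm_num) (by norm_num)
    have f2 : Int.fract (((6*q+2 : ℕ) : ℝ) / 2) = 0 :=
      fract_eq _ _ (3*q + 1) (by push_cast; ring) le_rfl one_pos
    rw [f3, f2, cast_half _ (Nat.even_mul_succ_self (q+1)).two_dvd]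
    push_cast
    ring
  · rw [if_neg (by norm_num)]
    have f3 : Int.fract (-((6*q+3 : ℕ) : ℝ) / 3) = 0 :=
      fract_eq _ _ (-2*q - 1) (by push_cast; ring) le_rfl one_pos
    have f2 : Int.fract (((6*q+3 : ℕ) : ℝ) / 2) = 1/2 :=
      fract_eq _ _ (3*q + 1) (by push_cast; ring) (by norm_num) (by norm_num)
    rw [f3, f2, cast_half _ (Nat.even_mul_succ_self (q+1)).two_dvd]
    push_cast
    ring
  · rw [if_neg (by norm_num)]
    have f3 : Int.fract (-((6*q+4 : ℕ) : ℝ) / 3) = 2/3 :=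
      fract_eq _ _ (-2*q - 2) (by push_cast; ring) (by norm_num) (by norm_num)
    have f2 : Int.fract (((6*q+4 : ℕ) : ℝ) / 2) = 0 :=
      fract_eq _ _ (3*q + 2) (by push_cast; ring) le_rfl one_pos
    rw [f3, f2, cast_half _ (Nat.even_mul_succ_self (q+1)).two_dvd]
    push_cast
    ring
  · rw [if_neg (by norm_num)]
    have f3 : Int.fract (-((6*q+5 : ℕ) : ℝ) / 3) = 1/3 :=
      fract_eq _ _ (-2*q - 2) (by push_cast; ring) (by norm_num) (by norm_num)
    have f2 : Int.fract (((6*q+5 : ℕ) : ℝ) / 2) = 1/2 :=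
      fract_eq _ _ (3*q + 2) (by push_cast; ring) (by norm_num) (by norm_num)
    rw [f3, f2, cast_half _ (Nat.even_mul_succ_self (q+1)).two_dvd]
    push_cast
    ring
end

section
/- With Λ(α,f) = {y ∈ ℤ^J : ∑_j y_j α_j ≡ 0 (mod f)} and s ∈ ℤ^J, s₀ ∈ ℤ satisfying 1 = ∑_{j∈J} s_j α_j + s₀ f, we have for every integer T and every ξ ∈ ℝ^J with all coordinates ξ_j < 0: ∑_{ζ : ζ^f=1} ζ^{−T} / ∏_{j∈J}(1 − ζ^{α_j} e^{ξ_j}) = f · e^{⟨ξ, Ts⟩} · ∑_{n ∈ (−Ts + ℝ_{≥0}^J) ∩ Λ(α,f)} e^{⟨ξ, n⟩}. -/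
open Polynomial Finset


set_option maxHeartbeats 1000000 in
theorem piGeom_hasSum_aux (N : ℕ) : ∀ {A : Type} [NormedField A] [CompleteSpace A]
    {J : Type*} [Fintype J], Fintype.card J ≤ N →
    ∀ (g : J → ℕ → A), (∀ j, Summable fun n => ‖g j n‖) →
    HasSum (fun m : J → ℕ => ∏ j, g j (m j)) (∏ j, ∑' n, g j n) := by
  induction N with
  | zero =>
    intro A _ _ J _ hcard g _
    haveI : IsEmpty J := Fintype.card_eq_zero_iff.mp (Nat.le_zero.mp hcard)
    have h1 : (fun m : J → ℕ => ∏ j, g j (m j)) = fun _ => 1 := by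
      funext m; simp [Finset.univ_eq_empty]
    rw [h1, Finset.univ_eq_empty, Finset.prod_empty]
    have := hasSum_single (f := fun _ : J → ℕ => (1 : A)) default
      (fun b' hb' => absurd (_root_.funext fun j => isEmptyElim j) hb')
    simpa using this
  | succ N ih =>
    intro A _ _ J _ hcard g hg
    rcases isEmpty_or_nonempty J with hJ | hJ
    · exact ih (by simp [Fintype.card_eq_zero]) g hg
    classical
    haveI := hJ
    obtain ⟨j₀⟩ := hJ
    have hcardK : Fintype.card {j : J // j ≠ j₀} ≤ N := by
      have h1 : Fintype.card {j : J // j ≠ j₀} = Fintype.card J - 1 := by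
        simp [Fintype.card_subtype_compl, Fintype.card_subtype_eq]
      have h2 : 1 ≤ Fintype.card J := Fintype.card_pos
      omega
    have hK : HasSum (fun m : {j : J // j ≠ j₀} → ℕ => ∏ j, g j.1 (m j))
        (∏ j : {j : J // j ≠ j₀}, ∑' n, g j.1 n) :=
      ih hcardK (fun j n => g j.1 n) (fun j => hg j.1)
    have hKnorm : Summable fun m : {j : J // j ≠ j₀} → ℕ => ‖∏ j, g j.1 (m j)‖ := by
      have := (ih (A := ℝ) hcardK (fun j n => ‖g j.1 n‖)
        (fun j => by simpa using hg j.1)).summable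
      simpa [norm_prod] using this
    have h0 : HasSum (g j₀) (∑' n, g j₀ n) := ((hg j₀).of_norm).hasSum
    have hs := summable_mul_of_summable_norm (hg j₀) hKnorm
    have hmul := h0.mul hK hs
    have hsplit : ∀ h : J → A, ∏ j, h j = h j₀ * ∏ j : {j : J // j ≠ j₀}, h j.1 := by
      intro h
      rw [← Finset.mul_prod_erase Finset.univ h (Finset.mem_univ j₀)]
      congr 1
      exact Finset.prod_subtype _ (fun x => by simp) h
    have he := (Equiv.funSplitAt j₀ ℕ).symm.hasSum_iff
      (f := fun m : J → ℕ => ∏ j, g j (m j))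
      (a := (∑' n, g j₀ n) * ∏ j : {j : J // j ≠ j₀}, ∑' n, g j.1 n)
    have hfun : ((fun m : J → ℕ => ∏ j, g j (m j)) ∘ (Equiv.funSplitAt j₀ ℕ).symm)
        = fun p : ℕ × ({j : J // j ≠ j₀} → ℕ) => g j₀ p.1 * ∏ j, g j.1 (p.2 j) := by
      funext p
      simp only [Function.comp]
      rw [hsplit (fun j => g j ((Equiv.funSplitAt j₀ ℕ).symm p j))]
      congr 1
      · simp [Equiv.funSplitAt, Equiv.piSplitAt]
      · refine Finset.prod_congr rfl fun j _ => ?_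
        congr 1
        simp [Equiv.funSplitAt, Equiv.piSplitAt, j.2]
    rw [hsplit (fun j => ∑' n, g j n)]
    exact he.mp (by rw [hfun]; exact hmul)


theorem rootSum_zpow (f : ℕ) (hf : 0 < f) (K : ℤ) :
    ∑ ζ ∈ (nthRoots f (1 : ℂ)).toFinset, ζ ^ K
      = if (f : ℤ) ∣ K then (f : ℂ) else 0 := by
  haveI : NeZero f := ⟨hf.ne'⟩
  set ω : ℂ := Complex.exp (2 * Real.pi * Complex.I / f) with hω
  have hprim : IsPrimitiveRoot ω f := Complex.isPrimitiveRoot_exp f hf.ne'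
  have hω0 : ω ≠ 0 := fun h => by simp [h] at hprim; exact absurd hprim.pow_eq_one (by simp [hf.ne'])
  have himg : (nthRoots f (1 : ℂ)).toFinset = (Finset.range f).image (ω ^ ·) := by
    ext z
    simp only [Multiset.mem_toFinset, mem_nthRoots hf, Finset.mem_image, Finset.mem_range]
    constructor
    · intro hz
      obtain ⟨i, hi, hiz⟩ := hprim.eq_pow_of_pow_eq_one hz
      exact ⟨i, hi, hiz⟩
    · rintro ⟨i, _, rfl⟩
      rw [← pow_mul, mul_comm, pow_mul, hprim.pow_eq_one, one_pow]
  rw [himg, Finset.sum_image (fun i hi j hj h =>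
    hprim.pow_inj (Finset.mem_range.mp hi) (Finset.mem_range.mp hj) h)]
  have hcomm : ∀ i : ℕ, (ω ^ i) ^ K = (ω ^ K) ^ i := by
    intro i
    rw [← zpow_natCast ω i, ← zpow_mul, mul_comm, zpow_mul, zpow_natCast]
  simp only [hcomm]
  by_cases hdvd : (f : ℤ) ∣ K
  · rw [if_pos hdvd]
    have h1 : ω ^ K = 1 := (hprim.zpow_eq_one_iff_dvd K).mpr hdvd
    simp [h1]
  · rw [if_neg hdvd]
    have h1 : ω ^ K ≠ 1 := fun h => hdvd ((hprim.zpow_eq_one_iff_dvd K).mp h)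
    rw [geom_sum_eq h1]
    have h2 : (ω ^ K) ^ f = 1 := by
      rw [← zpow_natCast (ω ^ K) f, ← zpow_mul, mul_comm, zpow_mul, zpow_natCast,
        hprim.pow_eq_one, one_zpow]
    rw [h2, sub_self, zero_div]
section
variable {J : Type*} [Fintype J] (a : J → ℕ) (f : ℕ) (s : J → ℤ) (s₀ T : ℤ)

def latticeEquiv (hBezout : (1:ℤ) = ∑ j, s j * a j + s₀ * f) :
    {m : J → ℕ // (f : ℤ) ∣ (∑ j, (m j : ℤ) * a j) - T} ≃
    {n : J → ℤ // (∀ j, -(T * s j) ≤ n j) ∧ (f : ℤ) ∣ ∑ j, n j * a j} := by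
  have hsa : (∑ j, s j * (a j : ℤ)) = 1 - s₀ * f := by linarith
  refine
    { toFun := fun m => ⟨fun j => (m.1 j : ℤ) - T * s j, ?_, ?_⟩
      invFun := fun n => ⟨fun j => (n.1 j + T * s j).toNat, ?_⟩
      left_inv := ?_
      right_inv := ?_ }
  · intro j
    have := Int.natCast_nonneg (m.1 j)
    simp only []
    linarith
  · obtain ⟨c, hc⟩ := m.2
    refine ⟨c + T * s₀, ?_⟩
    have hsum : ∑ j, ((m.1 j : ℤ) - T * s j) * a j
        = (∑ j, (m.1 j : ℤ) * a j) - T * ∑ j, s j * a j := by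
      simp only [sub_mul, Finset.sum_sub_distrib]
      congr 1
      rw [Finset.mul_sum]
      exact Finset.sum_congr rfl fun j _ => by ring
    rw [hsum, hsa]
    have : (∑ j, (m.1 j : ℤ) * a j) = f * c + T := by linarith
    rw [this]; ring
  · obtain ⟨c, hc⟩ := n.2.2
    have hco : ∀ j, (((n.1 j + T * s j).toNat : ℤ)) = n.1 j + T * s j := fun j =>
      Int.toNat_of_nonneg (by linarith [n.2.1 j])
    refine ⟨c - T * s₀, ?_⟩
    have hsum : ∑ j, (((n.1 j + T * s j).toNat : ℤ)) * a j
        = (∑ j, n.1 j * a j) + T * ∑ j, s j * a j := by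
      simp only [hco, add_mul, Finset.sum_add_distrib]
      congr 1
      rw [Finset.mul_sum]
      exact Finset.sum_congr rfl fun j _ => by ring
    rw [hsum, hsa, hc]; ring
  · intro m
    refine Subtype.ext (funext fun j => ?_)
    simp only [sub_add_cancel, Int.toNat_natCast]
  · intro n
    refine Subtype.ext (funext fun j => ?_)
    have : (0:ℤ) ≤ n.1 j + T * s j := by linarith [n.2.1 j]
    simp only [Int.toNat_of_nonneg this]
    ring

@[simp] lemma latticeEquiv_apply (hBezout : (1:ℤ) = ∑ j, s j * a j + s₀ * f)
    (m : {m : J → ℕ // (f : ℤ) ∣ (∑ j, (m j : ℤ) * a j) - T}) (j : J) :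
    ((latticeEquiv a f s s₀ T hBezout) m).1 j = (m.1 j : ℤ) - T * s j := rfl
end

set_option maxHeartbeats 1000000 in
/-- The finite sum over `f`-th roots of unity
`∑_ζ ζ^{-T} / ∏_{j∈J} (1 - ζ^{αⱼ} e^{ξⱼ})` equals
`f · e^{⟨ξ,Ts⟩}` times the generating sum of the lattice points of
`Λ(α,f) = {n ∈ ℤ^J : f ∣ ∑ nⱼαⱼ}` in the shifted cone `-Ts + ℝ^J_{≥0}`,
for any `ξ` with all coordinates negative. -/
theorem stmt_13 {J : Type*} [Fintype J] (a : J → ℕ) (ha : ∀ j, 0 < a j)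
    (f : ℕ) (hf : 0 < f) (hndvd : ∀ j, ¬ (f ∣ a j))
    (hgcd : Nat.gcd f (Finset.univ.gcd a) = 1)
    (s : J → ℤ) (s₀ : ℤ) (hBezout : 1 = ∑ j, s j * a j + s₀ * f)
    (T : ℤ) (ξ : J → ℝ) (hξ : ∀ j, ξ j < 0) :
    ∑ ζ ∈ (nthRoots f (1 : ℂ)).toFinset,
        ζ ^ (-T) / ∏ j, (1 - ζ ^ a j * Complex.exp (ξ j)) =
      (f : ℂ) * Complex.exp (∑ j, (ξ j : ℂ) * (T * s j)) *
        ∑' n : {n : J → ℤ // (∀ j, -(T * s j) ≤ n j) ∧ (f : ℤ) ∣ ∑ j, n j * a j},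
          Complex.exp (∑ j, (ξ j : ℂ) * (n.1 j)) := by
  classical
  have hterm : ∀ ζ ∈ (nthRoots f (1 : ℂ)).toFinset, HasSum
      (fun m : J → ℕ => ζ ^ ((∑ j, (m j : ℤ) * a j) - T) * Complex.exp (∑ j, (ξ j : ℂ) * (m j)))
      (ζ ^ (-T) / ∏ j, (1 - ζ ^ a j * Complex.exp (ξ j))) := by
    intro ζ hζ
    have hζf : ζ ^ f = 1 := (mem_nthRoots hf).mp (Multiset.mem_toFinset.mp hζ)
    have hζ0 : ζ ≠ 0 := fun h => by simp [h, zero_pow hf.ne'] at hζf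
    have hζ1 : ‖ζ‖ = 1 := Complex.norm_eq_one_of_pow_eq_one hζf hf.ne'
    have hx : ∀ j, ‖ζ ^ a j * Complex.exp (ξ j)‖ < 1 := by
      intro j
      rw [norm_mul, norm_pow, hζ1, one_pow, one_mul,
        Complex.norm_exp_ofReal]
      exact Real.exp_lt_one_iff.mpr (hξ j)
    have hgnorm : ∀ j, Summable fun n : ℕ => ‖(ζ ^ a j * Complex.exp (ξ j)) ^ n‖ := by
      intro j
      simp only [norm_pow]
      exact summable_geometric_of_lt_one (norm_nonneg _) (hx j)
    have hprod := piGeom_hasSum_aux (Fintype.card J) le_rfl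
      (fun j n => (ζ ^ a j * Complex.exp (ξ j)) ^ n) hgnorm
    have hval : (∏ j, ∑' n : ℕ, (ζ ^ a j * Complex.exp (ξ j)) ^ n)
        = ∏ j, (1 - ζ ^ a j * Complex.exp (ξ j))⁻¹ :=
      Finset.prod_congr rfl fun j _ => tsum_geometric_of_norm_lt_one (hx j)
    rw [hval] at hprod
    have hmul := hprod.mul_left (ζ ^ (-T))
    have hfun : (fun m : J → ℕ => ζ ^ (-T) * ∏ j, (ζ ^ a j * Complex.exp (ξ j)) ^ m j)
        = fun m : J → ℕ => ζ ^ ((∑ j, (m j : ℤ) * a j) - T)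
            * Complex.exp (∑ j, (ξ j : ℂ) * (m j)) := by
      funext m
      have h1 : ∏ j, (ζ ^ a j * Complex.exp (ξ j)) ^ m j
          = (ζ ^ (∑ j, a j * m j)) * Complex.exp (∑ j, (ξ j : ℂ) * (m j)) := by
        simp only [mul_pow, Finset.prod_mul_distrib, ← pow_mul, Finset.prod_pow_eq_pow_sum]
        congr 1
        calc ∏ x, Complex.exp (ξ x) ^ m x
            = ∏ x, Complex.exp ((m x : ℂ) * (ξ x : ℂ)) :=
              Finset.prod_congr rfl fun j _ => (Complex.exp_nat_mul _ _).symm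
          _ = Complex.exp (∑ x, (m x : ℂ) * (ξ x : ℂ)) := (Complex.exp_sum _ _).symm
          _ = Complex.exp (∑ j, (ξ j : ℂ) * (m j)) := by
              congr 1
              exact Finset.sum_congr rfl fun j _ => by ring
      rw [h1, ← mul_assoc]
      congr 1
      rw [← zpow_natCast ζ (∑ j, a j * m j), ← zpow_add₀ hζ0]
      congr 1
      push_cast
      rw [Finset.sum_congr rfl (fun j _ => mul_comm ((a j : ℤ)) ((m j : ℤ)))]
      ring
    rw [hfun] at hmul
    rwa [Finset.prod_inv_distrib, ← div_eq_mul_inv] at hmul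
  have hsummable : ∀ ζ ∈ (nthRoots f (1 : ℂ)).toFinset, Summable
      (fun m : J → ℕ => ζ ^ ((∑ j, (m j : ℤ) * a j) - T)
        * Complex.exp (∑ j, (ξ j : ℂ) * (m j))) :=
    fun ζ hζ => (hterm ζ hζ).summable
  calc ∑ ζ ∈ (nthRoots f (1 : ℂ)).toFinset,
        ζ ^ (-T) / ∏ j, (1 - ζ ^ a j * Complex.exp (ξ j))
      = ∑ ζ ∈ (nthRoots f (1 : ℂ)).toFinset, ∑' m : J → ℕ,
          ζ ^ ((∑ j, (m j : ℤ) * a j) - T) * Complex.exp (∑ j, (ξ j : ℂ) * (m j)) :=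
        Finset.sum_congr rfl fun ζ hζ => ((hterm ζ hζ).tsum_eq).symm
    _ = ∑' m : J → ℕ, ∑ ζ ∈ (nthRoots f (1 : ℂ)).toFinset,
          ζ ^ ((∑ j, (m j : ℤ) * a j) - T) * Complex.exp (∑ j, (ξ j : ℂ) * (m j)) :=
        (Summable.tsum_finsetSum hsummable).symm
    _ = ∑' m : J → ℕ, (if (f : ℤ) ∣ ((∑ j, (m j : ℤ) * a j) - T) then (f : ℂ) else 0)
          * Complex.exp (∑ j, (ξ j : ℂ) * (m j)) := by
        refine tsum_congr fun m => ?_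
        rw [← Finset.sum_mul, rootSum_zpow f hf]
    _ = ∑' m : J → ℕ, Set.indicator {m : J → ℕ | (f : ℤ) ∣ (∑ j, (m j : ℤ) * a j) - T}
          (fun m => (f : ℂ) * Complex.exp (∑ j, (ξ j : ℂ) * (m j))) m := by
        refine tsum_congr fun m => ?_
        by_cases h : (f : ℤ) ∣ (∑ j, (m j : ℤ) * a j) - T
        · simp [Set.indicator, h]
        · simp [Set.indicator, h]
    _ = ∑' m : {m : J → ℕ // (f : ℤ) ∣ (∑ j, (m j : ℤ) * a j) - T},
          (f : ℂ) * Complex.exp (∑ j, (ξ j : ℂ) * (m.1 j)) :=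
        (tsum_subtype {m : J → ℕ | (f : ℤ) ∣ (∑ j, (m j : ℤ) * a j) - T}
          (fun m => (f : ℂ) * Complex.exp (∑ j, (ξ j : ℂ) * (m j)))).symm
    _ = (f : ℂ) * ∑' m : {m : J → ℕ // (f : ℤ) ∣ (∑ j, (m j : ℤ) * a j) - T},
          Complex.exp (∑ j, (ξ j : ℂ) * (m.1 j)) := tsum_mul_left
    _ = (f : ℂ) * (Complex.exp (∑ j, (ξ j : ℂ) * (T * s j)) *
          ∑' n : {n : J → ℤ // (∀ j, -(T * s j) ≤ n j) ∧ (f : ℤ) ∣ ∑ j, n j * a j},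
            Complex.exp (∑ j, (ξ j : ℂ) * (n.1 j))) := by
        congr 1
        rw [← Equiv.tsum_eq (latticeEquiv a f s s₀ T hBezout)
          (fun n => Complex.exp (∑ j, (ξ j : ℂ) * (n.1 j))), ← tsum_mul_left]
        refine tsum_congr fun m => ?_
        rw [← Complex.exp_add]
        congr 1
        simp only [latticeEquiv_apply]
        push_cast
        rw [← Finset.sum_add_distrib]
        exact Finset.sum_congr rfl fun j _ => by ring
    _ = (f : ℂ) * Complex.exp (∑ j, (ξ j : ℂ) * (T * s j)) *
          ∑' n : {n : J → ℤ // (∀ j, -(T * s j) ≤ n j) ∧ (f : ℤ) ∣ ∑ j, n j * a j},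
            Complex.exp (∑ j, (ξ j : ℂ) * (n.1 j)) := by rw [mul_assoc]
end

section
/- Let α = [α₁,…,α_{N+1}] be positive integers with gcd 1, and let ℓ be the largest cardinality of a subset J ⊆ {1,…,N+1} with gcd{α_j : j∈J} > 1. If J₁, J₂ are two subsets of cardinality ℓ with gcds f₁ > 1 and f₂ > 1 and f₁ ≠ f₂, then gcd(f₁, f₂) = 1. -/
/-- If `ℓ` is the largest cardinality of a subset of indices whose `α`-gcd
exceeds `1`, then the gcds of two such subsets of cardinality `ℓ` are either
equal or coprime. -/
theorem stmt_16 (N : ℕ) (a : Fin (N + 1) → ℕ) (ha : ∀ i, 0 < a i)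
    (hgcd : Finset.univ.gcd a = 1) (ℓ : ℕ)
    (hmax : ∀ J : Finset (Fin (N + 1)), ℓ < J.card → J.gcd a = 1)
    (J₁ J₂ : Finset (Fin (N + 1))) (h₁ : J₁.card = ℓ) (h₂ : J₂.card = ℓ)
    (hf₁ : 1 < J₁.gcd a) (hf₂ : 1 < J₂.gcd a) (hne : J₁.gcd a ≠ J₂.gcd a) :
    Nat.gcd (J₁.gcd a) (J₂.gcd a) = 1 := by
  have hJne : J₁ ≠ J₂ := fun h => hne (by rw [h])
  have hcard : ℓ < (J₁ ∪ J₂).card := by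
    have hss : J₁ ⊂ J₁ ∪ J₂ := by
      refine ⟨Finset.subset_union_left, fun hsub => ?_⟩
      have : J₂ ⊆ J₁ := (Finset.union_subset_iff.mp hsub).2
      exact hJne ((Finset.eq_of_subset_of_card_le this (by omega)).symm)
    exact h₁ ▸ Finset.card_lt_card hss
  have hU : (J₁ ∪ J₂).gcd a = 1 := hmax _ hcard
  have hd : Nat.gcd (J₁.gcd a) (J₂.gcd a) ∣ (J₁ ∪ J₂).gcd a := by
    apply Finset.dvd_gcd
    intro i hi
    rcases Finset.mem_union.mp hi with h | h
    · exact (Nat.gcd_dvd_left _ _).trans (Finset.gcd_dvd h)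
    · exact (Nat.gcd_dvd_right _ _).trans (Finset.gcd_dvd h)
  rw [hU] at hd
  exact Nat.eq_one_of_dvd_one hd
end

section
/- Let U ⊆ ℝ^r be a unimodular cone with respect to a lattice Λ, with primitive generators g₁,…,g_r forming a ℤ-basis of Λ, and let s = ∑ s_i g_i ∈ ℝ^r. Then for ξ in the dual space with ⟨ξ, g_i⟩ < 0 for all i, ∑_{n ∈ (s+U) ∩ Λ} e^{⟨ξ,n⟩} = e^{⟨ξ,s⟩} · e^{⟨ξ, ∑_i {−s_i} g_i⟩} / ∏_{i=1}^r (1 − e^{⟨ξ, g_i⟩}), where {x} = x − ⌊x⌋. -/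
private lemma geom_hasSum (c t : ℝ) (hc : c < 0) :
    HasSum (fun n : ℤ => if t ≤ n then Real.exp (n * c) else 0)
      (Real.exp (⌈t⌉ * c) / (1 - Real.exp c)) := by
  have hlt : Real.exp c < 1 := by
    rw [Real.exp_lt_one_iff]; exact hc
  have hgeo : HasSum (fun k : ℕ => Real.exp (⌈t⌉ * c) * Real.exp c ^ k)
      (Real.exp (⌈t⌉ * c) / (1 - Real.exp c)) := by
    have := (hasSum_geometric_of_lt_one (Real.exp_nonneg c) hlt).mul_left
      (Real.exp (⌈t⌉ * c))
    simpa [div_eq_mul_inv] using this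
  have hinj : Function.Injective (fun k : ℕ => ⌈t⌉ + (k : ℤ)) := by
    intro a b h; simpa using h
  rw [← Function.Injective.hasSum_iff hinj]
  · convert hgeo using 2 with k
    have hle : t ≤ ((⌈t⌉ + (k : ℤ) : ℤ) : ℝ) := by
      push_cast
      have h1 := Int.le_ceil t
      have h2 : (0:ℝ) ≤ (k:ℕ) := Nat.cast_nonneg k
      linarith
    simp only [Function.comp, hle, if_pos]
    rw [← Real.exp_nat_mul, ← Real.exp_add]
    push_cast
    ring_nf
  · intro n hn
    rw [if_neg]
    intro hle
    apply hn
    refine ⟨(n - ⌈t⌉).toNat, ?_⟩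
    have h1 : ⌈t⌉ ≤ n := Int.ceil_le.mpr hle
    simp [Int.toNat_of_nonneg (sub_nonneg.mpr h1)]

private lemma pi_hasSum : ∀ (n : ℕ) (f : Fin n → ℤ → ℝ) (a : Fin n → ℝ),
    (∀ i k, 0 ≤ f i k) → (∀ i, HasSum (f i) (a i)) →
    HasSum (fun m : Fin n → ℤ => ∏ i, f i (m i)) (∏ i, a i) := by
  intro n
  induction n with
  | zero =>
    intro f a _ _
    simp only [Finset.univ_eq_empty, Finset.prod_empty]
    convert hasSum_single (f := fun _ : Fin 0 → ℤ => (1 : ℝ)) (fun _ => 0) ?_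
    · intro b hb; exact absurd (Subsingleton.elim _ _) hb
  | succ n ih =>
    intro f a hpos hsum
    have htail : HasSum (fun m : Fin n → ℤ => ∏ i, f (Fin.succ i) (m i))
        (∏ i, a (Fin.succ i)) :=
      ih (fun i => f (Fin.succ i)) (fun i => a (Fin.succ i))
        (fun i k => hpos (Fin.succ i) k) (fun i => hsum (Fin.succ i))
    have hmul : HasSum
        (fun p : ℤ × (Fin n → ℤ) => f 0 p.1 * ∏ i, f (Fin.succ i) (p.2 i))
        (a 0 * ∏ i, a (Fin.succ i)) := by
      have h1 : Summable fun k : ℤ => ‖f 0 k‖ := by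
        refine ((hsum 0).summable).congr fun k => ?_
        simp [Real.norm_of_nonneg (hpos 0 k)]
      have h2 : Summable fun m : Fin n → ℤ => ‖∏ i, f (Fin.succ i) (m i)‖ := by
        refine htail.summable.congr fun m => ?_
        rw [Real.norm_of_nonneg (Finset.prod_nonneg fun i _ => hpos (Fin.succ i) (m i))]
      set G : (Fin n → ℤ) → ℝ := fun m => ∏ i, f (Fin.succ i) (m i) with hG
      have hfg : Summable fun x : ℤ × (Fin n → ℤ) => f 0 x.1 * G x.2 :=
        summable_mul_of_summable_norm (f := f 0) (g := G) h1 h2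
      exact HasSum.mul (f := f 0) (g := G) (hsum 0) htail hfg
    have key := (Equiv.hasSum_iff
      (f := fun p : ℤ × (Fin n → ℤ) => f 0 p.1 * ∏ i, f (Fin.succ i) (p.2 i))
      ((Fin.consEquiv (fun _ => ℤ)).symm)).mpr hmul
    have hfeq : (fun m : Fin (n + 1) → ℤ => ∏ i, f i (m i)) =
        ((fun p : ℤ × (Fin n → ℤ) => f 0 p.1 * ∏ i, f (Fin.succ i) (p.2 i)) ∘
          (Fin.consEquiv (fun _ => ℤ)).symm) := by
      funext m
      simp [Fin.consEquiv, Function.comp, Fin.prod_univ_succ]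
      exact Or.inl rfl
    rw [Fin.prod_univ_succ, hfeq]
    exact key

private lemma sum_swap_aux (r : ℕ) (ξ : Fin r → ℝ) (g : Fin r → Fin r → ℝ)
    (x : Fin r → ℝ) :
    ∑ j, ξ j * ∑ i, x i * g i j = ∑ i, x i * ∑ j, ξ j * g i j := by
  simp only [Finset.mul_sum]
  rw [Finset.sum_comm]
  exact Finset.sum_congr rfl fun i _ => Finset.sum_congr rfl fun j _ => by ring

/-- Lattice-point generating function of a shifted unimodular cone: if
`g₁,…,g_r` is a ℤ-basis of the lattice `Λ = ℤg₁ + ⋯ + ℤg_r ⊆ ℝ^r`,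
`s = ∑ sᵢgᵢ`, and `⟨ξ,gᵢ⟩ < 0` for all `i`, then
`∑_{n ∈ (s+U)∩Λ} e^{⟨ξ,n⟩} = e^{⟨ξ,s⟩}·e^{⟨ξ,∑ {-sᵢ}gᵢ⟩} / ∏ᵢ(1-e^{⟨ξ,gᵢ⟩})`,
where `U = ℝ_{≥0}g₁ + ⋯ + ℝ_{≥0}g_r`.  The points of `(s+U) ∩ Λ` are exactly
the `∑ mᵢgᵢ` with `m ∈ ℤ^r`, `mᵢ ≥ sᵢ`. -/
theorem stmt_19 (r : ℕ) (g : Fin r → (Fin r → ℝ))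
    (hg : LinearIndependent ℝ g)
    (s' : Fin r → ℝ) (ξ : Fin r → ℝ)
    (hξ : ∀ i, ∑ j, ξ j * g i j < 0) :
    (∑' m : {m : Fin r → ℤ // ∀ i, s' i ≤ m i},
        Real.exp (∑ j, ξ j * (∑ i, (m.1 i : ℝ) * g i j))) =
      Real.exp (∑ j, ξ j * (∑ i, s' i * g i j)) *
        Real.exp (∑ j, ξ j * (∑ i, Int.fract (-s' i) * g i j)) /
        ∏ i, (1 - Real.exp (∑ j, ξ j * g i j)) := by
  set c : Fin r → ℝ := fun i => ∑ j, ξ j * g i j with hc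
  set f : Fin r → ℤ → ℝ := fun i n => if s' i ≤ n then Real.exp (n * c i) else 0
    with hf
  have hfpos : ∀ i k, 0 ≤ f i k := by
    intro i k; simp only [hf]; split <;> positivity
  have hgeom : ∀ i, HasSum (f i)
      (Real.exp (⌈s' i⌉ * c i) / (1 - Real.exp (c i))) :=
    fun i => geom_hasSum (c i) (s' i) (hξ i)
  have hpi := pi_hasSum r f _ hfpos hgeom
  -- identify the pi-sum with the indicator of the subtype
  have hind : HasSum
      ((fun m : Fin r → ℤ => Real.exp (∑ j, ξ j * ∑ i, (m i : ℝ) * g i j)) ∘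
        (Subtype.val : {m : Fin r → ℤ // ∀ i, s' i ≤ m i} → (Fin r → ℤ)))
      (∏ i, Real.exp (⌈s' i⌉ * c i) / (1 - Real.exp (c i))) := by
    refine (hasSum_subtype_iff_indicator (s := {m : Fin r → ℤ | ∀ i, s' i ≤ m i})).mpr ?_
    convert hpi using 1
    funext m
    simp only [Set.indicator]
    split_ifs with h
    · replace h : ∀ i, s' i ≤ (m i : ℝ) := h
      rw [sum_swap_aux, Real.exp_sum]
      exact Finset.prod_congr rfl fun i _ => by simp [hf, hc, h i]
    · replace h : ¬ ∀ i, s' i ≤ (m i : ℝ) := h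
      push_neg at h
      obtain ⟨i, hi⟩ := h
      exact (Finset.prod_eq_zero (Finset.mem_univ i) (by simp [hf, not_le.mpr hi])).symm
  have htsum := hind.tsum_eq
  simp only [Function.comp] at htsum
  rw [htsum]
  rw [sum_swap_aux r ξ g s', sum_swap_aux r ξ g (fun i => Int.fract (-s' i))]
  have hcdef : ∀ i, ∑ j, ξ j * g i j = c i := fun i => rfl
  simp_rw [hcdef]
  rw [← Real.exp_add, ← Finset.sum_add_distrib]
  have hkey : ∀ i, s' i * c i + Int.fract (-s' i) * c i = ⌈s' i⌉ * c i := by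
    intro i
    have : s' i + Int.fract (-s' i) = (⌈s' i⌉ : ℝ) := by
      rw [Int.fract]
      push_cast [Int.floor_neg]
      ring
    rw [← add_mul, this]
  simp_rw [hkey]
  rw [Real.exp_sum, Finset.prod_div_distrib]
end
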